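/- arXiv:1505.00163 — 9 statements merged into one kernel-verified Lean document; each statement's English description precedes it below -/
import Mathlib

section
/- Let V be a ℚ-vector space with a linear action of SL₂(ℤ), let u, w be as above, suppose (u-1)² = 0 in End(V), and suppose the central element i = w² acts as -1 on V. Let x = u - 1 (so x = log u since x² = 0). Then the identity xw + wx = -1 holds in End(V). -/
open Matrix

def u : Matrix.SpecialLinearGroup (Fin 2) ℤ :=
  ⟨!![1, 1; 0, 1], by simp [Matrix.det_fin_two_of]⟩

def w : Matrix.SpecialLinearGroup (Fin 2) ℤ :=
  ⟨!![0, 1; -1, 0], by simp [Matrix.det_fin_two_of]⟩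

/-!
The relation `(u w)³ = 1` of `SL₂(ℤ)` can be written as `u w u = w u⁻¹ w`, and, inverting
it, as `w u w = w² u⁻¹ w u⁻¹`. Since `x² = 0`, `u` acts as `1 + x` and `u⁻¹` as `1 - x`;
with `w² = -1`, expanding both identities and subtracting leaves `2 (x w + w x) = 2 w² = -2`.
-/

lemma u_mul_w_mul_u : u * w * u = w * u⁻¹ * w := by
  decide

lemma w_mul_u_mul_w : w * u * w = w ^ 2 * (u⁻¹ * w * u⁻¹) := by
  decide

section Ring

variable {R : Type*} [Ring R] {x w : R}

lemma eq_one_sub_of_mul_one_add_eq_one (hx : x ^ 2 = 0) {b : R} (h : b * (1 + x) = 1) :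
    b = 1 - x :=
  calc b = b * (1 - x ^ 2) := by rw [hx, sub_zero, mul_one]
    _ = b * (1 + x) * (1 - x) := by noncomm_ring
    _ = 1 - x := by rw [h, one_mul]

lemma two_mul_add_mul_eq_two_mul_self (h₁ : (1 + x) * w * (1 + x) = w * (1 - x) * w)
    (h₂ : w * (1 + x) * w = -((1 - x) * w * (1 - x))) :
    2 * (x * w + w * x) = 2 * (w * w) := by
  rw [← sub_eq_zero]
  calc 2 * (x * w + w * x) - 2 * (w * w)
      = ((1 + x) * w * (1 + x) - w * (1 - x) * w)
        - (w * (1 + x) * w - -((1 - x) * w * (1 - x))) := by noncomm_ring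
    _ = 0 := by rw [sub_eq_zero.2 h₁, sub_eq_zero.2 h₂, sub_zero]

end Ring

/-- If `(u-1)² = 0` and the central element `i = w²` acts as `-1`, then
`xw + wx = -1` in `End(V)`, where `x = u - 1`. -/
theorem quadratic_minus_identity
    (V : Type*) [AddCommGroup V] [Module ℚ V]
    (ρ : Representation ℚ (Matrix.SpecialLinearGroup (Fin 2) ℤ) V)
    (hquad : (ρ u - 1) ^ 2 = 0)
    (hi : ρ (w ^ 2) = -1) :
    (ρ u - 1) * ρ w + ρ w * (ρ u - 1) = -1 := by
  set X := ρ u - 1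
  have hu : ρ u = 1 + X := by rw [add_sub_cancel]
  have hu_inv : ρ u⁻¹ = 1 - X :=
    eq_one_sub_of_mul_one_add_eq_one hquad (by rw [← hu, ← map_mul, inv_mul_cancel, map_one])
  have h₁ : (1 + X) * ρ w * (1 + X) = ρ w * (1 - X) * ρ w := by
    simpa only [map_mul, hu, hu_inv] using congrArg ρ u_mul_w_mul_u
  have h₂ : ρ w * (1 + X) * ρ w = -((1 - X) * ρ w * (1 - X)) := by
    simpa only [map_mul, hu, hu_inv, hi, neg_one_mul, mul_assoc] using congrArg ρ w_mul_u_mul_w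
  have two_isUnit : IsUnit (2 : Module.End ℚ V) := by
    simpa only [map_ofNat] using (IsUnit.mk0 (2 : ℚ) two_ne_zero).map (algebraMap ℚ _)
  rw [← neg_one_mul, ← hi, pow_two, map_mul]
  exact two_isUnit.mul_left_cancel (two_mul_add_mul_eq_two_mul_self h₁ h₂)
end

section
/- Let V be a ℚ-vector space with a linear action of SL₂(ℤ) such that (u-1)² = 0 and the central involution i = w² acts as the identity on V. Then the action of SL₂(ℤ) on V is trivial. -/
/-! Write `ρ u = 1 + n` with `n² = 0` and `b = ρ w` with `b² = 1`. The relation `(w u)³ = 1` gives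
`(1 + n)(1 + p)(1 + n) = b` for `p = b n b`, again with `p² = 0`; inverting, also
`(1 - n)(1 - p)(1 - n) = b`. The difference of the two is `2(2n + p + npn)`, so over `ℚ` we get
`np = 0` and `p = -2n`. Then `b = (1 + n)(1 - 2n)(1 + n) = 1`, hence `p = n`, `3n = 0` and `n = 0`.
Since `u` and `w` generate `SL₂(ℤ)`, the action is trivial. -/

open Matrix

theorem mul_mul_conj_mul_eq_of_pow_three_eq_one {M : Type*} [Monoid M] {a b : M}
    (hb : b * b = 1) (hab : (b * a) ^ 3 = 1) : a * (b * a * b) * a = b :=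
  calc a * (b * a * b) * a = (b * b) * (a * b * a * b * a) := by
        rw [hb, one_mul]; simp only [mul_assoc]
    _ = b * (b * a) ^ 3 := by simp only [pow_succ, pow_zero, one_mul, mul_assoc]
    _ = b := by rw [hab, mul_one]

section Ring

variable {R : Type*} [Ring R]

theorem one_add_mul_one_sub_of_mul_self_eq_zero {n : R} (hn : n * n = 0) :
    (1 + n) * (1 - n) = 1 := by
  rw [show (1 + n) * (1 - n) = 1 - n * n by noncomm_ring, hn, sub_zero]

theorem eq_neg_two_nsmul_of_sandwich_eq [IsAddTorsionFree R] {n p : R} (hn : n * n = 0)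
    (h : (1 + n) * (1 + p) * (1 + n) = (1 - n) * (1 - p) * (1 - n)) : p = -(2 • n) := by
  have hodd : 2 • (2 • n + p + n * p * n) = 0 :=
    calc 2 • (2 • n + p + n * p * n)
        = (1 + n) * (1 + p) * (1 + n) - (1 - n) * (1 - p) * (1 - n) := by noncomm_ring
      _ = 0 := by rw [h, sub_self]
  have hsum : 2 • n + p + n * p * n = 0 := (nsmul_eq_zero_iff_right two_ne_zero).mp hodd
  have hnp : n * p = 0 :=
    calc n * p = n * (2 • n + p + n * p * n) - 2 • (n * n) - (n * n) * (p * n) := by noncomm_ring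
      _ = 0 := by rw [hsum, hn]; simp
  rw [hnp, zero_mul, add_zero] at hsum
  exact eq_neg_of_add_eq_zero_right hsum

theorem eq_one_and_eq_one_of_sq_sub_one_eq_zero [IsAddTorsionFree R] {a b : R}
    (ha : (a - 1) ^ 2 = 0) (hb : b ^ 2 = 1) (hab : (b * a) ^ 3 = 1) : a = 1 ∧ b = 1 := by
  obtain ⟨n, rfl⟩ : ∃ n, a = 1 + n := ⟨a - 1, (add_sub_cancel 1 a).symm⟩
  rw [add_sub_cancel_left, sq] at ha
  rw [sq] at hb
  obtain ⟨p, hp_def⟩ : ∃ p, b * n * b = p := ⟨_, rfl⟩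
  have hn_inv := one_add_mul_one_sub_of_mul_self_eq_zero ha
  have hp_inv : (1 + p) * (1 - p) = 1 := by
    refine one_add_mul_one_sub_of_mul_self_eq_zero ?_
    rw [← hp_def, show b * n * b * (b * n * b) = b * n * (b * b) * n * b by noncomm_ring, hb,
      mul_one, mul_assoc b, ha, mul_zero, zero_mul]
  have hsandwich : (1 + n) * (1 + p) * (1 + n) = b := by
    have hconj : b * (1 + n) * b = 1 + p := by rw [mul_add, mul_one, add_mul, hb, hp_def]
    rw [← mul_mul_conj_mul_eq_of_pow_three_eq_one hb hab, hconj]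
  have hsandwich_neg : (1 - n) * (1 - p) * (1 - n) = b := by
    have hinv : b * ((1 - n) * (1 - p) * (1 - n)) = 1 := by
      rw [← hsandwich, show (1 + n) * (1 + p) * (1 + n) * ((1 - n) * (1 - p) * (1 - n))
        = (1 + n) * ((1 + p) * ((1 + n) * (1 - n)) * (1 - p)) * (1 - n) by noncomm_ring,
        hn_inv, mul_one, hp_inv, mul_one, hn_inv]
    calc (1 - n) * (1 - p) * (1 - n) = (b * b) * ((1 - n) * (1 - p) * (1 - n)) := by
          rw [hb, one_mul]
      _ = b := by rw [mul_assoc, hinv, mul_one]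
  have hp_eq := eq_neg_two_nsmul_of_sandwich_eq ha (hsandwich.trans hsandwich_neg.symm)
  have hb1 : b = 1 := by
    rw [← hsandwich, hp_eq]
    calc (1 + n) * (1 + -(2 • n)) * (1 + n) = 1 - 3 • (n * n) - 2 • (n * (n * n)) := by
          noncomm_ring
      _ = 1 := by simp [ha]
  refine ⟨?_, hb1⟩
  rw [hb1, one_mul, mul_one] at hp_def
  have h3 : 3 • n = 0 :=
    calc 3 • n = n + 2 • n := succ_nsmul' n 2
      _ = 0 := by nth_rw 1 [hp_def.trans hp_eq]; exact neg_add_cancel _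
  rw [(nsmul_eq_zero_iff_right three_ne_zero).mp h3, add_zero]

end Ring

theorem u_eq_T : u = ModularGroup.T := by
  ext i j; fin_cases i <;> fin_cases j <;> rfl

theorem w_eq_S_inv : w = ModularGroup.S⁻¹ := by
  ext i j; fin_cases i <;> fin_cases j <;> rfl

theorem closure_u_w : Subgroup.closure {u, w} = ⊤ := by
  rw [eq_top_iff, ← SpecialLinearGroup.SL2Z_generators, Subgroup.closure_le]
  rintro _ (rfl | rfl)
  · rw [← inv_inv ModularGroup.S, ← w_eq_S_inv]
    exact inv_mem (Subgroup.subset_closure (Set.mem_insert_of_mem u rfl))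
  · rw [← u_eq_T]
    exact Subgroup.subset_closure (Set.mem_insert u _)

theorem w_mul_u_pow_three : (w * u) ^ 3 = 1 := by
  ext i j; fin_cases i <;> fin_cases j <;> rfl

/-- If `(u-1)² = 0` and `i = w²` acts trivially, then the action of `SL₂(ℤ)` is trivial. -/
theorem quadratic_plus_trivial
    (V : Type*) [AddCommGroup V] [Module ℚ V]
    (ρ : Representation ℚ (Matrix.SpecialLinearGroup (Fin 2) ℤ) V)
    (hquad : (ρ u - 1) ^ 2 = 0)
    (hi : ρ (w ^ 2) = 1) :
    ∀ g : Matrix.SpecialLinearGroup (Fin 2) ℤ, ρ g = 1 := by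
  have := IsAddTorsionFree.of_module_rat (Module.End ℚ V)
  obtain ⟨hu, hw⟩ := eq_one_and_eq_one_of_sq_sub_one_eq_zero (b := ρ w) hquad
    (by rw [← map_pow, hi]) (by rw [← map_mul, ← map_pow, w_mul_u_pow_three, map_one])
  have hker : Subgroup.closure {u, w} ≤ ρ.ker := by
    rw [Subgroup.closure_le]
    rintro _ (rfl | rfl) <;> assumption
  intro g
  exact hker (closure_u_w ▸ Subgroup.mem_top g)
end

section
/- Let V be a ℚ-vector space with an SL₂(ℤ)-action such that (u-1)³ = 0 and i = w² acts as -1. Then (u-1)² = 0 in End(V), i.e., V is quadratic. -/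
open Matrix

private instance : DecidableEq (Matrix.SpecialLinearGroup (Fin 2) ℤ) :=
  fun A B => decidable_of_iff (A.1 = B.1) Subtype.ext_iff.symm

private def l : Matrix.SpecialLinearGroup (Fin 2) ℤ :=
  ⟨!![1, 0; -1, 1], by simp [Matrix.det_fin_two_of]⟩

private lemma qcancel {R : Type*} [Ring R] [Algebra ℚ R] (q : ℕ) (hq : q ≠ 0) (x : R)
    (h : (q : R) * x = 0) : x = 0 := by
  have e : (q : R) * x = (q : ℚ) • x := by rw [Algebra.smul_def, map_natCast]
  have h2 : (q : ℚ) • x = 0 := by rw [← e]; exact h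
  calc x = ((q:ℚ)⁻¹ * (q:ℚ)) • x := by
        rw [inv_mul_cancel₀ (by exact_mod_cast hq), one_smul]
    _ = (q:ℚ)⁻¹ • ((q:ℚ) • x) := by rw [mul_smul]
    _ = 0 := by rw [h2, smul_zero]

set_option maxHeartbeats 1600000 in
private lemma chain {R : Type*} [Ring R] [Algebra ℚ R] (n m w : R)
    (hn3 : n^3 = 0) (hw2 : w*w = -1) (hwn : w*n = m*w) (hwm : w*m = n*w)
    (hP : w = (1+n)*(1+m)*(1+n)) (hQ : w = (1+m)*(1+n)*(1+m)) :
    n^2 = 0 := by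
  have g0 : n*n*n = 0 := by
    have e : (n*n*n) = n^3 := by noncomm_ring
    rw [e, hn3]
  have g2 : w*w + (1:R) = 0 := by
    have e : (w*w + (1:R)) = w*w - (-1) := by noncomm_ring
    rw [e, hw2, sub_self]
  have g3 : -m*w + w*n = 0 := by
    have e : (-m*w + w*n) = w*n - m*w := by noncomm_ring
    rw [e, hwn, sub_self]
  have g4 : -n*w + w*m = 0 := by
    have e : (-n*w + w*m) = w*m - n*w := by noncomm_ring
    rw [e, hwm, sub_self]
  have g5 : -n*m*n + -n*n + -n*m + -m*n + (-2:R)*n + -m + w + (-1:R) = 0 := by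
    have e : (-n*m*n + -n*n + -n*m + -m*n + (-2:R)*n + -m + w + (-1:R)) = w - (1+n)*(1+m)*(1+n) := by noncomm_ring
    rw [e, ← hP, sub_self]
  have g6 : -m*n*m + -n*m + -m*n + -m*m + -n + (-2:R)*m + w + (-1:R) = 0 := by
    have e : (-m*n*m + -n*m + -m*n + -m*m + -n + (-2:R)*m + w + (-1:R)) = w - (1+m)*(1+n)*(1+m) := by noncomm_ring
    rw [e, ← hQ, sub_self]
  have hm : m = -(w*n*w) := by
    have t1 : w*n*w = m*(w*w) := by rw [hwn, mul_assoc]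
    rw [t1, hw2]; noncomm_ring
  have g1 : m*m*m = 0 := by
    have e : (m*m*m) = m*m*m := by noncomm_ring
    rw [e, hm]
    have e2 : -(w*n*w) * -(w*n*w) * -(w*n*w) = -(w*n*(w*w)*n*(w*w)*n*w) := by noncomm_ring
    rw [e2, hw2]
    have e3 : w*n*(-1:R)*n*(-1)*n*w = w*(n*n*n)*w := by noncomm_ring
    rw [e3]
    have e4 : n*n*n = (n*n*n) := by noncomm_ring
    rw [e4, g0]; simp
  have g7 : w*m*m + -m*n + -w*m + -n + -m + w + (-1:R) = 0 := by
    have e : (w*m*m + -m*n + -w*m + -n + -m + w + (-1:R)) = ((n*n*n) * m*n) + (n*n * (-n*m*n + -n*n + -n*m + -m*n + (-2:R)*n + -m + w + (-1:R))) + ((n*n*n) * n) + ((n*n*n) * m) + -(n * (-n*m*n + -n*n + -n*m + -m*n + (-2:R)*n + -m + w + (-1:R))) + ((n*n*n)) + (n * (-n*w + w*m)) + ((-n*m*n + -n*n + -n*m + -m*n + (-2:R)*n + -m + w + (-1:R))) + ((-n*w + w*m) * m) + -((-n*w + w*m)) := by first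
      | (noncomm_ring; done)
      | (noncomm_ring; norm_num; done)
      | (noncomm_ring; simp only [← mul_assoc]; norm_num; done)
      | (noncomm_ring; simp; noncomm_ring; done)
      | (noncomm_ring; simp only [← mul_assoc]; norm_num; noncomm_ring; done)
      | (noncomm_ring; simp only [← mul_assoc]; noncomm_ring; done)
      | (noncomm_ring; simp; norm_num)
    rw [e, g0, g4, g5]; simp
  have g8 : w*n*n + -n*m + -w*n + -n + -m + w + (-1:R) = 0 := by
    have e : (w*n*n + -n*m + -w*n + -n + -m + w + (-1:R)) = ((m*m*m) * n*m) + (m*m * (-m*n*m + -n*m + -m*n + -m*m + -n + (-2:R)*m + w + (-1:R))) + -(m * (-m*n*m + -n*m + -m*n + -m*m + -n + (-2:R)*m + w + (-1:R))) + ((m*m*m) * n) + ((m*m*m) * m) + ((-m*n*m + -n*m + -m*n + -m*m + -n + (-2:R)*m + w + (-1:R))) + ((m*m*m)) + (m * (-m*w + w*n)) + ((-m*w + w*n) * n) + -((-m*w + w*n)) := by first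
      | (noncomm_ring; done)
      | (noncomm_ring; norm_num; done)
      | (noncomm_ring; simp only [← mul_assoc]; norm_num; done)
      | (noncomm_ring; simp; noncomm_ring; done)
      | (noncomm_ring; simp only [← mul_assoc]; norm_num; noncomm_ring; done)
      | (noncomm_ring; simp only [← mul_assoc]; noncomm_ring; done)
      | (noncomm_ring; simp; norm_num)
    rw [e, g1, g3, g6]; simp
  have g9 : w*n*m + n*n + w*n + w*m + -n + w + (1:R) = 0 := by
    have e : (w*n*m + n*n + w*n + w*m + -n + w + (1:R)) = -((w*m*m + -m*n + -w*m + -n + -m + w + (-1:R)) * w) + -(w*m * (-m*w + w*n)) + -(w * (-m*w + w*n) * n) + ((w*w + (1:R)) * n*n) + (m * (-n*w + w*m)) + ((-m*w + w*n) * m) + (w * (-m*w + w*n)) + -((w*w + (1:R)) * n) + ((-n*w + w*m)) + ((-m*w + w*n)) + ((w*w + (1:R))) := by first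
      | (noncomm_ring; done)
      | (noncomm_ring; norm_num; done)
      | (noncomm_ring; simp only [← mul_assoc]; norm_num; done)
      | (noncomm_ring; simp; noncomm_ring; done)
      | (noncomm_ring; simp only [← mul_assoc]; norm_num; noncomm_ring; done)
      | (noncomm_ring; simp only [← mul_assoc]; noncomm_ring; done)
      | (noncomm_ring; simp; norm_num)
    rw [e, g2, g3, g4, g7]; simp
  have g10 : m*n*n*m + n*n*m + m*n*n + (4:R)*n*n + -m*m + (-2:R)*n + (-2:R)*m + (2:R)*w = 0 := by
    have e : (m*n*n*m + n*n*m + m*n*n + (4:R)*n*n + -m*m + (-2:R)*n + (-2:R)*m + (2:R)*w) = -((w*m*m + -m*n + -w*m + -n + -m + w + (-1:R)) * n*m) + -(w*m * (-m*n*m + -n*m + -m*n + -m*m + -n + (-2:R)*m + w + (-1:R))) + (2:R) * (w * (-m*n*m + -n*m + -m*n + -m*m + -n + (-2:R)*m + w + (-1:R))) + -((w*m*m + -m*n + -w*m + -n + -m + w + (-1:R)) * n) + -(w * (m*m*m)) + ((-m*n*m + -n*m + -m*n + -m*m + -n + (-2:R)*m + w + (-1:R))) + (3:R) * ((w*n*m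 + n*n + w*n + w*m + -n + w + (1:R))) + -(w * (-m*w + w*n)) + ((w*w + (1:R)) * n) + (-2:R) * ((w*w + (1:R))) := by first
      | (noncomm_ring; done)
      | (noncomm_ring; norm_num; done)
      | (noncomm_ring; simp only [← mul_assoc]; norm_num; done)
      | (noncomm_ring; simp; noncomm_ring; done)
      | (noncomm_ring; simp only [← mul_assoc]; norm_num; noncomm_ring; done)
      | (noncomm_ring; simp only [← mul_assoc]; noncomm_ring; done)
      | (noncomm_ring; simp; norm_num)
    rw [e, g1, g2, g3, g6, g7, g9]; simp
  have g11 : w*m*n + m*m + w*n + w*m + -m + w + (1:R) = 0 := by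
    have e : (w*m*n + m*m + w*n + w*m + -m + w + (1:R)) = ((w*w + (1:R)) * m*m) + -(w * (w*m*m + -m*n + -w*m + -n + -m + w + (-1:R))) + -((w*w + (1:R)) * m) + ((w*w + (1:R))) := by first
      | (noncomm_ring; done)
      | (noncomm_ring; norm_num; done)
      | (noncomm_ring; simp only [← mul_assoc]; norm_num; done)
      | (noncomm_ring; simp; noncomm_ring; done)
      | (noncomm_ring; simp only [← mul_assoc]; norm_num; noncomm_ring; done)
      | (noncomm_ring; simp only [← mul_assoc]; noncomm_ring; done)
      | (noncomm_ring; simp; norm_num)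
    rw [e, g2, g7]; simp
  have g12 : n*n*m + m*m*n + (-2:R)*n*n + -n*m + (2:R)*m*n + m*m + (-3:R)*w*n + (3:R)*n + (3:R)*m + (-3:R)*w + (-1:R) = 0 := by
    have e : (n*n*m + m*m*n + (-2:R)*n*n + -n*m + (2:R)*m*n + m*m + (-3:R)*w*n + (3:R)*n + (3:R)*m + (-3:R)*w + (-1:R)) = -((-m*w + w*n) * m*m) + -(m * (w*m*m + -m*n + -w*m + -n + -m + w + (-1:R))) + ((w*n*m + n*n + w*n + w*m + -n + w + (1:R)) * m) + ((-m*w + w*n) * m) + (-2:R) * ((w*n*m + n*n + w*n + w*m + -n + w + (1:R))) + -((w*m*m + -m*n + -w*m + -n + -m + w + (-1:R))) + -((-m*w + w*n)) := by first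
      | (noncomm_ring; done)
      | (noncomm_ring; norm_num; done)
      | (noncomm_ring; simp only [← mul_assoc]; norm_num; done)
      | (noncomm_ring; simp; noncomm_ring; done)
      | (noncomm_ring; simp only [← mul_assoc]; norm_num; noncomm_ring; done)
      | (noncomm_ring; simp only [← mul_assoc]; noncomm_ring; done)
      | (noncomm_ring; simp; norm_num)
    rw [e, g3, g7, g9]; simp
  have g13 : n*m*m*n + n*m*m + m*m*n + -n*n + (4:R)*m*m + (-2:R)*n + (-2:R)*m + (2:R)*w = 0 := by
    have e : (n*m*m*n + n*m*m + m*m*n + -n*n + (4:R)*m*m + (-2:R)*n + (-2:R)*m + (2:R)*w) = -((w*n*n + -n*m + -w*n + -n + -m + w + (-1:R)) * m*n) + -(w*n * (-n*m*n + -n*n + -n*m + -m*n + (-2:R)*n + -m + w + (-1:R))) + -(w * (n*n*n)) + -((w*n*n + -n*m + -w*n + -n + -m + w + (-1:R)) * m) + (2:R) * (w * (-n*m*n + -n*n + -n*m + -m*n + (-2:R)*n + -m + w + (-1:R))) + ((-n*m*n + -n*n + -n*m + -m*n + (-2:R)*n + -m + w + (-1:R))) + -(w * (-n*w + w*m)) +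 (3:R) * ((w*m*n + m*m + w*n + w*m + -m + w + (1:R))) + ((w*w + (1:R)) * m) + (-2:R) * ((w*w + (1:R))) := by first
      | (noncomm_ring; done)
      | (noncomm_ring; norm_num; done)
      | (noncomm_ring; simp only [← mul_assoc]; norm_num; done)
      | (noncomm_ring; simp; noncomm_ring; done)
      | (noncomm_ring; simp only [← mul_assoc]; norm_num; noncomm_ring; done)
      | (noncomm_ring; simp only [← mul_assoc]; noncomm_ring; done)
      | (noncomm_ring; simp; norm_num)
    rw [e, g0, g2, g4, g5, g8, g11]; simp
  have g14 : n*n + n*m + -m*n + -m*m + w*n + -w*m = 0 := by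
    refine qcancel 3 (by norm_num) _ ?_
    have e : ((3:ℕ):R) * (n*n + n*m + -m*n + -m*m + w*n + -w*m) = -((-n*w + w*m) * n*n) + -(n * (w*n*n + -n*m + -w*n + -n + -m + w + (-1:R))) + ((w*m*n + m*m + w*n + w*m + -m + w + (1:R)) * n) + -((n*n*m + m*m*n + (-2:R)*n*n + -n*m + (2:R)*m*n + m*m + (-3:R)*w*n + (3:R)*n + (3:R)*m + (-3:R)*w + (-1:R))) + ((-n*w + w*m) * n) + -((w*n*n + -n*m + -w*n + -n + -m + w + (-1:R))) + (-2:R) * ((w*m*n + m*m + w*n + w*m + -m + w + (1:R))) + -((-n*w + w*m)) := by first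
      | (noncomm_ring; done)
      | (noncomm_ring; norm_num; done)
      | (noncomm_ring; simp only [← mul_assoc]; norm_num; done)
      | (noncomm_ring; simp; noncomm_ring; done)
      | (noncomm_ring; simp only [← mul_assoc]; norm_num; noncomm_ring; done)
      | (noncomm_ring; simp only [← mul_assoc]; noncomm_ring; done)
      | (noncomm_ring; simp; norm_num)
    rw [e, g4, g8, g11, g12]; simp
  have g15 : n*m*m + m*m*n + (5:R)*n*m + (-3:R)*m*n + -m*m + w*n + (-7:R)*w*m + (4:R)*n + (4:R)*m + (-4:R)*w + (-2:R) = 0 := by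
    have e : (n*m*m + m*m*n + (5:R)*n*m + (-3:R)*m*n + -m*m + w*n + (-7:R)*w*m + (4:R)*n + (4:R)*m + (-4:R)*w + (-2:R)) = ((-m*w + w*n) * n*m) + (m * (w*n*m + n*n + w*n + w*m + -n + w + (1:R))) + -((w*n*n + -n*m + -w*n + -n + -m + w + (-1:R)) * m) + -(m * (n*n + n*m + -m*n + -m*m + w*n + -w*m)) + -((-m*n*m + -n*m + -m*n + -m*m + -n + (-2:R)*m + w + (-1:R))) + -((m*m*m)) + (2:R) * ((-m*w + w*n) * m) + (-3:R) * ((w*n*m + n*n + w*n + w*m + -n + w + (1:R))) + (3:R) * ((n*n + n*m + -m*n + -m*m + w*n + -w*m)) + ((-m*w + w*n)) := by first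
      | (noncomm_ring; done)
      | (noncomm_ring; norm_num; done)
      | (noncomm_ring; simp only [← mul_assoc]; norm_num; done)
      | (noncomm_ring; simp; noncomm_ring; done)
      | (noncomm_ring; simp only [← mul_assoc]; norm_num; noncomm_ring; done)
      | (noncomm_ring; simp only [← mul_assoc]; noncomm_ring; done)
      | (noncomm_ring; simp; norm_num)
    rw [e, g1, g3, g6, g8, g9, g14]; simp
  have g16 : n*m + -m*n + w*n + -w*m = 0 := by
    refine qcancel 6 (by norm_num) _ ?_
    have e : ((6:ℕ):R) * (n*m + -m*n + w*n + -w*m) = -((m*n*n*m + n*n*m + m*n*n + (4:R)*n*n + -m*m + (-2:R)*n + (-2:R)*m + (2:R)*w) * m*m) + (m*n*n * (m*m*m)) + (n*n * (m*m*m)) + ((m*n*n*m + n*n*m + m*n*n + (4:R)*n*n + -m*m + (-2:R)*n + (-2:R)*m + (2:R)*w) * m) + (3:R) * ((n*n*m + m*m*n + (-2:R)*n*n + -n*m + (2:R)*m*n + m*m + (-3:R)*w*n + (3:R)*n + (3:R)*m + (-3:R)*w + (-1:R)) * m) + -((m*n*n*m + n*n*m + m*n*n + (4:R)*n*n + -m*m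 + (-2:R)*n + (-2:R)*m + (2:R)*w)) + (3:R) * (m * (-m*n*m + -n*m + -m*n + -m*m + -n + (-2:R)*m + w + (-1:R))) + -((m*m*m) * m) + (3:R) * ((n*n*m + m*m*n + (-2:R)*n*n + -n*m + (2:R)*m*n + m*m + (-3:R)*w*n + (3:R)*n + (3:R)*m + (-3:R)*w + (-1:R))) + ((n*m*m + m*m*n + (5:R)*n*m + (-3:R)*m*n + -m*m + w*n + (-7:R)*w*m + (4:R)*n + (4:R)*m + (-4:R)*w + (-2:R))) + (m * (n*n + n*m + -m*n + -m*m + w*n + -w*m)) + (4:R) * ((-m*n*m + -n*m + -m*n + -m*m + -n + (-2:R)*m + w + (-1:R))) + ((-m*w + w*n) * n) + -((-m*w + w*n) * m) + -((w*n*n + -n*m + -w*n + -n + -m + w + (-1:R))) + (10:R) * ((w*n*m + n*n + w*n + w*m + -n + w + (1:R))) + (2:R) * ((w*m*m + -m*n + -w*m + -n + -m + w + (-1:R))) + (3:R) * ((-m*w + w*n)) := by first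
      | (noncomm_ring; done)
      | (noncomm_ring; norm_num; done)
      | (noncomm_ring; simp only [← mul_assoc]; norm_num; done)
      | (noncomm_ring; simp; noncomm_ring; done)
      | (noncomm_ring; simp only [← mul_assoc]; norm_num; noncomm_ring; done)
      | (noncomm_ring; simp only [← mul_assoc]; noncomm_ring; done)
      | (noncomm_ring; simp; norm_num)
    rw [e, g1, g3, g6, g7, g8, g9, g10, g12, g14, g15]; simp
  have g17 : m*m*n + m*n + (-2:R)*m*m + (-2:R)*w*n + -w*m + (3:R)*n + (3:R)*m + (-3:R)*w + (-1:R) = 0 := by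
    refine qcancel 6 (by norm_num) _ ?_
    have e : ((6:ℕ):R) * (m*m*n + m*n + (-2:R)*m*m + (-2:R)*w*n + -w*m + (3:R)*n + (3:R)*m + (-3:R)*w + (-1:R)) = ((m*m*m) * n*n*m) + -(m*m * (m*n*n*m + n*n*m + m*n*n + (4:R)*n*n + -m*m + (-2:R)*n + (-2:R)*m + (2:R)*w)) + (m * (m*n*n*m + n*n*m + m*n*n + (4:R)*n*n + -m*m + (-2:R)*n + (-2:R)*m + (2:R)*w)) + ((m*m*m) * n*n) + -((m*n*n*m + n*n*m + m*n*n + (4:R)*n*n + -m*m + (-2:R)*n + (-2:R)*m + (2:R)*w)) + (3:R) * (m*m * (n*n + n*m + -m*n + -m*m + w*n + -w*m)) + (3:R) * (m * (-m*n*m + -n*m + -m*n + -m*m + -n + (-2:R)*m + w + (-1:R))) + (3:R) * ((m*m*m) * n) + (2:R) * ((m*m*m) * m) + (3:R) * (m * (-m*w + w*n) * n) + (-3:R) * (m * (-m*w + w*n) * m) + (3:R) * ((-m*w + w*n) * n*n) + (-3:R) * ((-m*w + w*n) * n*m) + (-3:R) * (w * (n*n*n)) + (3:R) * ((w*n*n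 + -n*m + -w*n + -n + -m + w + (-1:R)) * m) + ((n*n*m + m*m*n + (-2:R)*n*n + -n*m + (2:R)*m*n + m*m + (-3:R)*w*n + (3:R)*n + (3:R)*m + (-3:R)*w + (-1:R))) + (3:R) * ((n*m*m + m*m*n + (5:R)*n*m + (-3:R)*m*n + -m*m + w*n + (-7:R)*w*m + (4:R)*n + (4:R)*m + (-4:R)*w + (-2:R))) + (-3:R) * (m * (n*n + n*m + -m*n + -m*m + w*n + -w*m)) + (-6:R) * ((-m*n*m + -n*m + -m*n + -m*m + -n + (-2:R)*m + w + (-1:R))) + -((m*m*m)) + (-2:R) * (m * (-m*w + w*n)) + (-5:R) * ((-m*w + w*n) * n) + (3:R) * ((-m*w + w*n) * m) + (5:R) * ((w*n*n + -n*m + -w*n + -n + -m + w + (-1:R))) + (6:R) * ((n*n + n*m + -m*n + -m*m + w*n + -w*m)) + (-18:R) * ((n*m + -m*n + w*n + -w*m)) + (5:R) * ((-m*w + w*n)) := by first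
      | (noncomm_ring; done)
      | (noncomm_ring; norm_num; done)
      | (noncomm_ring; simp only [← mul_assoc]; norm_num; done)
      | (noncomm_ring; simp; noncomm_ring; done)
      | (noncomm_ring; simp only [← mul_assoc]; norm_num; noncomm_ring; done)
      | (noncomm_ring; simp only [← mul_assoc]; noncomm_ring; done)
      | (noncomm_ring; simp; norm_num)
    rw [e, g0, g1, g3, g6, g8, g10, g12, g14, g15, g16]; simp
  have g18 : m*n + w*m + n + m + -w + (1:R) = 0 := by
    refine qcancel 6 (by norm_num) _ ?_
    have e : ((6:ℕ):R) * (m*n + w*m + n + m + -w + (1:R)) = ((w*m*m + -m*n + -w*m + -n + -m + w + (-1:R)) * n*n*m) + -(w*m * (m*n*n*m + n*n*m + m*n*n + (4:R)*n*n + -m*m + (-2:R)*n + (-2:R)*m + (2:R)*w)) + (m * (n*n*n) * m) + (2:R) * (w * (m*n*n*m + n*n*m + m*n*n + (4:R)*n*n + -m*m + (-2:R)*n + (-2:R)*m + (2:R)*w)) + ((w*m*m + -m*n + -w*m + -n + -m + w + (-1:R)) * n*n) + ((n*n*n) * m) + (m * (n*n*n)) + ((m*n*n*m + n*n*m + m*n*n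 + (4:R)*n*n + -m*m + (-2:R)*n + (-2:R)*m + (2:R)*w)) + (-3:R) * ((w*n*n + -n*m + -w*n + -n + -m + w + (-1:R)) * m) + (3:R) * ((w*m*n + m*m + w*n + w*m + -m + w + (1:R)) * n) + -(w * (m*m*m)) + ((n*n*n)) + (-3:R) * ((n*m*m + m*m*n + (5:R)*n*m + (-3:R)*m*n + -m*m + w*n + (-7:R)*w*m + (4:R)*n + (4:R)*m + (-4:R)*w + (-2:R))) + (-12:R) * ((w*n*n + -n*m + -w*n + -n + -m + w + (-1:R))) + (-3:R) * ((w*n*m + n*n + w*n + w*m + -n + w + (1:R))) + (-5:R) * ((w*m*n + m*m + w*n + w*m + -m + w + (1:R))) + (-2:R) * (w * (-m*w + w*n)) + (2:R) * ((w*w + (1:R)) * n) + (-4:R) * ((w*w + (1:R))) := by first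
      | (noncomm_ring; done)
      | (noncomm_ring; norm_num; done)
      | (noncomm_ring; simp only [← mul_assoc]; norm_num; done)
      | (noncomm_ring; simp; noncomm_ring; done)
      | (noncomm_ring; simp only [← mul_assoc]; norm_num; noncomm_ring; done)
      | (noncomm_ring; simp only [← mul_assoc]; noncomm_ring; done)
      | (noncomm_ring; simp; norm_num)
    rw [e, g0, g1, g2, g3, g7, g8, g9, g10, g11, g15]; simp
  have g19 : m*m + -n + -m + w = 0 := by
    refine qcancel 12 (by norm_num) _ ?_
    have e : ((12:ℕ):R) * (m*m + -n + -m + w) = ((n*n*m + m*m*n + (-2:R)*n*n + -n*m + (2:R)*m*n + m*m + (-3:R)*w*n + (3:R)*n + (3:R)*m + (-3:R)*w + (-1:R)) * n) + (n * (-n*m*n + -n*n + -n*m + -m*n + (-2:R)*n + -m + w + (-1:R))) + -(m*m * (n*n + n*m + -m*n + -m*m + w*n + -w*m)) + -(m * (-m*n*m + -n*m + -m*n + -m*m + -n + (-2:R)*m + w + (-1:R))) + -((m*m*m) * n) + -((m*m*m) * m) + -(m * (-m*w + w*n) * n) + (m * (-m*w + w*n) * m) + -((-m*w + w*n) * n*n)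 + ((-m*w + w*n) * n*m) + (w * (n*n*n)) + -((w*n*n + -n*m + -w*n + -n + -m + w + (-1:R)) * m) + (3:R) * ((n*n*n)) + ((n*n*m + m*m*n + (-2:R)*n*n + -n*m + (2:R)*m*n + m*m + (-3:R)*w*n + (3:R)*n + (3:R)*m + (-3:R)*w + (-1:R))) + (-2:R) * ((-n*m*n + -n*n + -n*m + -m*n + (-2:R)*n + -m + w + (-1:R))) + -((n*m*m + m*m*n + (5:R)*n*m + (-3:R)*m*n + -m*m + w*n + (-7:R)*w*m + (4:R)*n + (4:R)*m + (-4:R)*w + (-2:R))) + (-2:R) * (m * (n*n + n*m + -m*n + -m*m + w*n + -w*m)) + -((-m*n*m + -n*m + -m*n + -m*m + -n + (-2:R)*m + w + (-1:R))) + (-4:R) * ((m*m*n + m*n + (-2:R)*m*m + (-2:R)*w*n + -w*m + (3:R)*n + (3:R)*m + (-3:R)*w + (-1:R))) + (-3:R) * ((m*m*m)) + (-2:R) * ((-m*w + w*n) * n) + (2:R) * ((-m*w + w*n) * m) + (5:R) * ((w*n*n + -n*m + -w*n + -n + -m + w + (-1:R))) + (-3:R) * ((w*n*m + n*n + w*n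 + w*m + -n + w + (1:R))) + (2:R) * ((n*n + n*m + -m*n + -m*m + w*n + -w*m)) + (6:R) * ((n*m + -m*n + w*n + -w*m)) + ((-n*w + w*m)) + -((-m*w + w*n)) := by first
      | (noncomm_ring; done)
      | (noncomm_ring; norm_num; done)
      | (noncomm_ring; simp only [← mul_assoc]; norm_num; done)
      | (noncomm_ring; simp; noncomm_ring; done)
      | (noncomm_ring; simp only [← mul_assoc]; norm_num; noncomm_ring; done)
      | (noncomm_ring; simp only [← mul_assoc]; noncomm_ring; done)
      | (noncomm_ring; simp; norm_num)
    rw [e, g0, g1, g3, g4, g5, g6, g8, g9, g12, g14, g15, g16, g17]; simp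
  have g20 : n + m + -w = 0 := by
    refine qcancel 6 (by norm_num) _ ?_
    have e : ((6:ℕ):R) * (n + m + -w) = ((n*n*n) * n*m) + -(n*n * (n*n*m + m*m*n + (-2:R)*n*n + -n*m + (2:R)*m*n + m*m + (-3:R)*w*n + (3:R)*n + (3:R)*m + (-3:R)*w + (-1:R))) + ((n*n*m + m*m*n + (-2:R)*n*n + -n*m + (2:R)*m*n + m*m + (-3:R)*w*n + (3:R)*n + (3:R)*m + (-3:R)*w + (-1:R)) * m*n) + (m*m * (-n*m*n + -n*n + -n*m + -m*n + (-2:R)*n + -m + w + (-1:R))) + (-2:R) * ((n*n*n) * n) + -((n*n*n) * m) + (-4:R) * (n * (-n*m*n + -n*n + -n*m + -m*n + (-2:R)*n + -m + w + (-1:R))) + ((n*n*m + m*m*n + (-2:R)*n*n + -n*m + (2:R)*m*n + m*m + (-3:R)*w*n + (3:R)*n + (3:R)*m + (-3:R)*w + (-1:R)) * m) + (3:R) * (n * (-n*w + w*m) * n) + ((n*m*m*n + n*m*m + m*m*n + -n*n + (4:R)*m*m + (-2:R)*n + (-2:R)*m + (2:R)*w)) + (3:R) * ((-n*w + w*m)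 * m*n) + (2:R) * (m * (-n*m*n + -n*n + -n*m + -m*n + (-2:R)*n + -m + w + (-1:R))) + (m*m * (n*n + n*m + -m*n + -m*m + w*n + -w*m)) + (m * (-m*n*m + -n*m + -m*n + -m*m + -n + (-2:R)*m + w + (-1:R))) + ((m*m*m) * n) + ((m*m*m) * m) + (m * (-m*w + w*n) * n) + -(m * (-m*w + w*n) * m) + ((-m*w + w*n) * n*n) + -((-m*w + w*n) * n*m) + -(w * (n*n*n)) + ((w*n*n + -n*m + -w*n + -n + -m + w + (-1:R)) * m) + (-3:R) * (w * (-n*m*n + -n*n + -n*m + -m*n + (-2:R)*n + -m + w + (-1:R))) + (-3:R) * ((w*m*m + -m*n + -w*m + -n + -m + w + (-1:R)) * n) + -((n*n*n)) + ((n*n*m + m*m*n + (-2:R)*n*n + -n*m + (2:R)*m*n + m*m + (-3:R)*w*n + (3:R)*n + (3:R)*m + (-3:R)*w + (-1:R))) + (3:R) * (n * (-n*w + w*m)) + (7:R) * ((-n*m*n + -n*n + -n*m + -m*n + (-2:R)*n + -m + w + (-1:R))) + ((n*m*m + m*m*n + (5:R)*n*m + (-3:R)*m*n + -m*m + w*n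 + (-7:R)*w*m + (4:R)*n + (4:R)*m + (-4:R)*w + (-2:R))) + (3:R) * ((-n*w + w*m) * m) + -(m * (n*n + n*m + -m*n + -m*m + w*n + -w*m)) + (-2:R) * ((-m*n*m + -n*m + -m*n + -m*m + -n + (-2:R)*m + w + (-1:R))) + (-2:R) * ((m*m*n + m*n + (-2:R)*m*m + (-2:R)*w*n + -w*m + (3:R)*n + (3:R)*m + (-3:R)*w + (-1:R))) + (m * (-m*w + w*n)) + ((-m*w + w*n) * m) + (-3:R) * ((w*n*n + -n*m + -w*n + -n + -m + w + (-1:R))) + (-3:R) * ((w*m*n + m*m + w*n + w*m + -m + w + (1:R))) + (-3:R) * ((w*m*m + -m*n + -w*m + -n + -m + w + (-1:R))) + (-2:R) * ((n*n + n*m + -m*n + -m*m + w*n + -w*m)) + (-6:R) * ((n*m + -m*n + w*n + -w*m)) + (-4:R) * ((-n*w + w*m)) + (-6:R) * ((m*m + -n + -m + w)) + (3:R) * ((-m*w + w*n)) + (3:R) * ((w*w + (1:R))) := by first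
      | (noncomm_ring; done)
      | (noncomm_ring; norm_num; done)
      | (noncomm_ring; simp only [← mul_assoc]; norm_num; done)
      | (noncomm_ring; simp; noncomm_ring; done)
      | (noncomm_ring; simp only [← mul_assoc]; norm_num; noncomm_ring; done)
      | (noncomm_ring; simp only [← mul_assoc]; noncomm_ring; done)
      | (noncomm_ring; simp; norm_num)
    rw [e, g0, g1, g2, g3, g4, g5, g6, g7, g8, g11, g12, g13, g14, g15, g16, g17, g19]; simp
  have gt : n*n = 0 := by
    have e : (n*n) = ((n*n + n*m + -m*n + -m*m + w*n + -w*m)) + -((n*m + -m*n + w*n + -w*m)) + ((m*m + -n + -m + w)) + ((n + m + -w)) := by first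
      | (noncomm_ring; done)
      | (noncomm_ring; norm_num; done)
      | (noncomm_ring; simp only [← mul_assoc]; norm_num; done)
      | (noncomm_ring; simp; noncomm_ring; done)
      | (noncomm_ring; simp only [← mul_assoc]; norm_num; noncomm_ring; done)
      | (noncomm_ring; simp only [← mul_assoc]; noncomm_ring; done)
      | (noncomm_ring; simp; norm_num)
    rw [e, g14, g16, g19, g20]; simp
  have efin : n^2 = (n*n) := by noncomm_ring
  rw [efin, gt]

/-- If `(u-1)³ = 0` and `i = w²` acts as `-1`, then already `(u-1)² = 0`. -/
theorem cubic_minus_is_quadratic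
    (V : Type*) [AddCommGroup V] [Module ℚ V]
    (ρ : Representation ℚ (Matrix.SpecialLinearGroup (Fin 2) ℤ) V)
    (hcub : (ρ u - 1) ^ 3 = 0)
    (hi : ρ (w ^ 2) = -1) :
    (ρ u - 1) ^ 2 = 0 := by
  have hw2 : ρ w * ρ w = -1 := by
    rw [← _root_.map_mul, ← pow_two]; exact hi
  have hswap : w * u = l * w := by decide
  have hswap2 : w * l = u * w := by decide
  have hPg : u * l * u = w := by decide
  have hQg : l * u * l = w := by decide
  have hwn : ρ w * (ρ u - 1) = (ρ l - 1) * ρ w := by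
    have h1 : ρ w * ρ u = ρ l * ρ w := by
      rw [← _root_.map_mul, ← _root_.map_mul, ← hswap]
    rw [mul_sub, sub_mul, mul_one, one_mul, h1]
  have hwm : ρ w * (ρ l - 1) = (ρ u - 1) * ρ w := by
    have h1 : ρ w * ρ l = ρ u * ρ w := by
      rw [← _root_.map_mul, ← _root_.map_mul, hswap2]
    rw [mul_sub, sub_mul, mul_one, one_mul, h1]
  have e1 : (1 : Module.End ℚ V) + (ρ u - 1) = ρ u := by noncomm_ring
  have e2 : (1 : Module.End ℚ V) + (ρ l - 1) = ρ l := by noncomm_ring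
  have hP : ρ w = (1 + (ρ u - 1)) * (1 + (ρ l - 1)) * (1 + (ρ u - 1)) := by
    rw [e1, e2, ← _root_.map_mul, ← _root_.map_mul, hPg]
  have hQ : ρ w = (1 + (ρ l - 1)) * (1 + (ρ u - 1)) * (1 + (ρ l - 1)) := by
    rw [e1, e2, ← _root_.map_mul, ← _root_.map_mul, hQg]
  exact chain (ρ u - 1) (ρ l - 1) (ρ w) hcub hw2 hwn hwm hP hQ
end

section
/- Let V be a ℚ-vector space with an SL₂(ℤ)-action such that (u-1)³ = 0 and w² acts as 1, and let x = log u. Then wxwx² = -xwx² in End(V). -/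
/-!
Write `a = 1 + n` and `b` for the images of `u` and `w`. Since `n³ = 0`, `a` has the explicit
inverse `a' = 1 - n + n²`, and `a n² = a' n² = n²`. As `(w u)³ = 1` in `SL₂(ℤ)` and `b² = 1`, we
get `b a b = a' b a'` and `b a' b = a b a`; multiplied on the right by `n²` they express `b n b n²`
and `b n² b n²` through `b n²`, which yields `b y b n² = -y b n²` for `y = 2n - n² = 2x`. Finally
`x² = n²`.
-/

open Matrix

theorem mul_mul_eq_inv_mul_inv_mul_inv_of_mul_pow_three_eq_one {G : Type*} [Group G] {a b : G}
    (h : (b * a) ^ 3 = 1) : b * a * b = a⁻¹ * b⁻¹ * a⁻¹ := by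
  have : b * a * b * (a * b * a) = 1 := by rw [← h, pow_three]; group
  rw [eq_inv_of_mul_eq_one_left this]
  group

theorem inv_mul_inv_mul_inv_eq_mul_mul_of_mul_pow_three_eq_one {G : Type*} [Group G] {a b : G}
    (h : (b * a) ^ 3 = 1) : b⁻¹ * a⁻¹ * b⁻¹ = a * b * a := by
  simpa only [_root_.mul_inv_rev, inv_inv, mul_assoc] using
    congrArg (·⁻¹) (mul_mul_eq_inv_mul_inv_mul_inv_of_mul_pow_three_eq_one h)

section Ring

variable {R : Type*} [Ring R] {n b : R}

theorem one_add_mul_one_sub_add_sq (hn : n ^ 3 = 0) : (1 + n) * (1 - n + n ^ 2) = 1 := by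
  calc (1 + n) * (1 - n + n ^ 2) = 1 + n ^ 3 := by noncomm_ring
    _ = 1 := by rw [hn, add_zero]

theorem one_add_mul_sq (hn : n ^ 3 = 0) : (1 + n) * n ^ 2 = n ^ 2 := by
  rw [add_mul, one_mul, ← pow_succ', hn, add_zero]

theorem one_sub_add_sq_mul_sq (hn : n ^ 3 = 0) : (1 - n + n ^ 2) * n ^ 2 = n ^ 2 := by
  calc (1 - n + n ^ 2) * n ^ 2 = n ^ 2 - n ^ 3 + n * n ^ 3 := by noncomm_ring
    _ = n ^ 2 := by rw [hn, mul_zero, sub_zero, add_zero]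

theorem mul_mul_mul_sq (hn : n ^ 3 = 0) (hb : b * b = 1)
    (h : b * (1 + n) * b = (1 - n + n ^ 2) * b * (1 - n + n ^ 2)) :
    b * n * b * n ^ 2 = (1 - n + n ^ 2) * b * n ^ 2 - n ^ 2 := by
  calc b * n * b * n ^ 2 = b * (1 + n) * b * n ^ 2 - b * b * n ^ 2 := by noncomm_ring
    _ = (1 - n + n ^ 2) * b * n ^ 2 - n ^ 2 := by
      rw [h, hb, one_mul, mul_assoc _ (1 - n + n ^ 2), one_sub_add_sq_mul_sq hn]

theorem mul_sq_mul_sq (hn : n ^ 3 = 0) (hb : b * b = 1)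
    (h : b * (1 - n + n ^ 2) * b = (1 + n) * b * (1 + n)) :
    b * n ^ 2 * b * n ^ 2 = (1 + n) * b * n ^ 2 - n ^ 2 + b * n * b * n ^ 2 := by
  have : b * (1 - n + n ^ 2) * b * n ^ 2 = (1 + n) * b * n ^ 2 := by
    rw [h, mul_assoc _ (1 + n), one_add_mul_sq hn]
  calc b * n ^ 2 * b * n ^ 2
      = b * (1 - n + n ^ 2) * b * n ^ 2 - b * b * n ^ 2 + b * n * b * n ^ 2 := by noncomm_ring
    _ = _ := by rw [this, hb, one_mul]

theorem mul_two_mul_sub_sq_mul_sq (hn : n ^ 3 = 0) (hb : b * b = 1)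
    (h₁ : b * (1 + n) * b = (1 - n + n ^ 2) * b * (1 - n + n ^ 2))
    (h₂ : b * (1 - n + n ^ 2) * b = (1 + n) * b * (1 + n)) :
    b * (2 * n - n ^ 2) * b * n ^ 2 = -((2 * n - n ^ 2) * b * n ^ 2) := by
  calc b * (2 * n - n ^ 2) * b * n ^ 2 = 2 * (b * n * b * n ^ 2) - b * n ^ 2 * b * n ^ 2 := by
        noncomm_ring
    _ = _ := by
      rw [mul_sq_mul_sq hn hb h₂, mul_mul_mul_sq hn hb h₁]
      noncomm_ring

end Ring

theorem sq_sub_smul_sq {K R : Type*} [CommSemiring K] [Ring R] [Algebra K R] {n : R}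
    (hn : n ^ 3 = 0) (c : K) : (n - c • n ^ 2) ^ 2 = n ^ 2 := by
  have hn4 : n ^ 2 * n ^ 2 = 0 := by rw [← pow_add, pow_succ, hn, zero_mul]
  rw [sq (n - _), mul_sub, sub_mul, sub_mul, smul_mul_assoc, mul_smul_comm, smul_mul_smul_comm,
    ← pow_succ', ← pow_succ, hn, hn4, smul_zero, smul_zero, ← sq]
  abel

/-- If `(u-1)³ = 0` and `w²` acts as `1`, then with `x = log u` one has
`wxwx² = -xwx²` in `End(V)`. -/
theorem cubic_plus_wxwx2
    (V : Type*) [AddCommGroup V] [Module ℚ V]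
    (ρ : Representation ℚ (Matrix.SpecialLinearGroup (Fin 2) ℤ) V)
    (hcub : (ρ u - 1) ^ 3 = 0)
    (hi : ρ (w ^ 2) = 1)
    (x : Module.End ℚ V)
    (hx : x = (ρ u - 1) - (2⁻¹ : ℚ) • (ρ u - 1) ^ 2) :
    ρ w * x * ρ w * x ^ 2 = -(x * ρ w * x ^ 2) := by
  set n := ρ u - 1
  have hρ_inv {g : Matrix.SpecialLinearGroup (Fin 2) ℤ} : ρ g⁻¹ * ρ g = 1 := by
    rw [← map_mul, inv_mul_cancel, map_one]
  have hu : ρ u = 1 + n := (add_sub_cancel _ _).symm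
  have hu_inv : ρ u⁻¹ = 1 - n + n ^ 2 :=
    left_inv_eq_right_inv hρ_inv (hu ▸ one_add_mul_one_sub_add_sq hcub)
  have hw : ρ w * ρ w = 1 := by rw [← map_mul, ← sq, hi]
  have hw_inv : ρ w⁻¹ = ρ w := left_inv_eq_right_inv hρ_inv hw
  have h₁ : ρ w * (1 + n) * ρ w = (1 - n + n ^ 2) * ρ w * (1 - n + n ^ 2) := by
    simpa only [map_mul, hu, hu_inv, hw_inv] using
      congrArg ρ (mul_mul_eq_inv_mul_inv_mul_inv_of_mul_pow_three_eq_one w_mul_u_pow_three)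
  have h₂ : ρ w * (1 - n + n ^ 2) * ρ w = (1 + n) * ρ w * (1 + n) := by
    simpa only [map_mul, hu, hu_inv, hw_inv] using
      congrArg ρ (inv_mul_inv_mul_inv_eq_mul_mul_of_mul_pow_three_eq_one w_mul_u_pow_three)
  have hx_half : x = (2⁻¹ : ℚ) • (2 * n - n ^ 2) := by
    rw [hx, two_mul]
    module
  rw [hx, sq_sub_smul_sq hcub, ← hx, hx_half, smul_mul_assoc, mul_smul_comm, smul_mul_assoc,
    smul_mul_assoc, smul_mul_assoc, mul_two_mul_sub_sq_mul_sq hcub hw h₁ h₂, smul_neg]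
end

section
/- Let V be a ℚ[SL₂(ℤ)]-module of length ≤ n (i.e., (u-1)ⁿ = 0 in End V), with x = log u. Suppose that for all k = 1,…,n one has (1/(n-k)!)·w x^{n-k} w x^{n-1} = ((-1)^{n-k}/(k-1)!)·x^{k-1} w x^{n-1} in End(V). Then the maps π_k = (1/((n-1)!)²)·x^{n-k} w x^{n-1} w x^{k-1}, k = 1,…,n, are pairwise orthogonal idempotents of End(V). -/
open Matrix

/-- Criterion: under the displayed family of identities, the maps
`π_k = (1/((n-1)!)²) x^{n-k} w x^{n-1} w x^{k-1}` (for `k = 1,…,n`) are pairwise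
orthogonal idempotents of `End(V)`. -/
theorem pi_orthogonal_idempotents
    (n : ℕ) (hn : 2 ≤ n)
    (V : Type*) [AddCommGroup V] [Module ℚ V]
    (ρ : Representation ℚ (Matrix.SpecialLinearGroup (Fin 2) ℤ) V)
    (hlen : (ρ u - 1) ^ n = 0)
    (x : Module.End ℚ V)
    (hx : x = ∑ k ∈ Finset.Icc (1 : ℕ) (n - 1),
      ((-1 : ℚ) ^ (k + 1) * (k : ℚ)⁻¹) • (ρ u - 1) ^ k)
    (heq : ∀ k ∈ Finset.Icc (1 : ℕ) n,
      (((n - k).factorial : ℚ))⁻¹ • (ρ w * x ^ (n - k) * ρ w * x ^ (n - 1)) =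
        ((-1 : ℚ) ^ (n - k) * ((k - 1).factorial : ℚ)⁻¹) • (x ^ (k - 1) * ρ w * x ^ (n - 1)))
    (π : ℕ → Module.End ℚ V)
    (hπ : ∀ k, π k = ((((n - 1).factorial : ℚ)) ^ 2)⁻¹ •
      (x ^ (n - k) * ρ w * x ^ (n - 1) * ρ w * x ^ (k - 1))) :
    ∀ j ∈ Finset.Icc (1 : ℕ) n, ∀ k ∈ Finset.Icc (1 : ℕ) n,
      π j * π k = if j = k then π j else 0 := by
  -- notation
  set W : Module.End ℚ V := ρ w with hW
  set a : Module.End ℚ V := ρ u - 1 with ha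
  -- x = a * s for some s commuting with a, hence x ^ n = 0
  have hxn : x ^ n = 0 := by
    set s : Module.End ℚ V :=
      ∑ k ∈ Finset.Icc (1 : ℕ) (n - 1), ((-1 : ℚ) ^ (k + 1) * (k : ℚ)⁻¹) • a ^ (k - 1) with hs
    have hxs : x = a * s := by
      rw [hx, hs, Finset.mul_sum]
      refine Finset.sum_congr rfl fun k hk => ?_
      have hk1 : 1 ≤ k := (Finset.mem_Icc.mp hk).1
      rw [mul_smul_comm, ← pow_succ']
      congr 2
      omega
    have hcomm : Commute a s := by
      apply Commute.sum_right
      intro k _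
      exact (Commute.pow_right (Commute.refl a) _).smul_right _
    rw [hxs, hcomm.mul_pow, hlen, zero_mul]
  have hxge : ∀ m, n ≤ m → x ^ m = 0 := by
    intro m hm
    have : m = n + (m - n) := by omega
    rw [this, pow_add, hxn, zero_mul]
  -- merged-power helpers
  have hpp : ∀ (p q : ℕ) (Z : Module.End ℚ V), x ^ p * (x ^ q * Z) = x ^ (p + q) * Z := by
    intro p q Z; rw [← mul_assoc, ← pow_add]
  have hzero : ∀ (p q : ℕ), n ≤ p + q → ∀ Z : Module.End ℚ V, x ^ p * (x ^ q * Z) = 0 := by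
    intro p q h Z; rw [hpp, hxge _ h, zero_mul]
  -- the key rewriting rule, contextual form
  have hW' : ∀ m, m ≤ n - 1 → ∀ Z : Module.End ℚ V,
      W * (x ^ m * (W * (x ^ (n - 1) * Z))) =
        ((m.factorial : ℚ) * ((-1 : ℚ) ^ m * (((n - 1 - m).factorial : ℚ))⁻¹)) •
          (x ^ (n - 1 - m) * (W * (x ^ (n - 1) * Z))) := by
    intro m hm Z
    have hmem : n - m ∈ Finset.Icc (1 : ℕ) n := by
      rw [Finset.mem_Icc]; omega
    have h1 := heq (n - m) hmem
    rw [show n - (n - m) = m from by omega, show n - m - 1 = n - 1 - m from by omega] at h1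
    have hf : ((m.factorial : ℚ)) ≠ 0 := Nat.cast_ne_zero.mpr m.factorial_ne_zero
    have h2 : W * x ^ m * W * x ^ (n - 1) =
        ((m.factorial : ℚ) * ((-1 : ℚ) ^ m * (((n - 1 - m).factorial : ℚ))⁻¹)) •
          (x ^ (n - 1 - m) * W * x ^ (n - 1)) := by
      rw [mul_smul, ← h1, smul_smul, mul_inv_cancel₀ hf, one_smul]
    calc W * (x ^ m * (W * (x ^ (n - 1) * Z)))
        = (W * x ^ m * W * x ^ (n - 1)) * Z := by simp only [mul_assoc]
      _ = _ := by rw [h2]; simp only [smul_mul_assoc, mul_assoc]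
  -- scalar facts
  set f : ℚ := ((n - 1).factorial : ℚ) with hfdef
  have hf0 : f ≠ 0 := Nat.cast_ne_zero.mpr (n - 1).factorial_ne_zero
  set c : ℚ := (f ^ 2)⁻¹ with hcdef
  set d : ℚ := f * ((-1 : ℚ) ^ (n - 1) * ((Nat.factorial 0 : ℚ))⁻¹) with hddef
  have hd : d = f * (-1 : ℚ) ^ (n - 1) := by
    simp [hddef]
  have hdd : d * d = f ^ 2 := by
    rw [hd]
    have : ((-1 : ℚ) ^ (n - 1)) * ((-1 : ℚ) ^ (n - 1)) = 1 := by
      rw [← pow_add, ← two_mul, pow_mul]; norm_num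
    calc f * (-1 : ℚ) ^ (n - 1) * (f * (-1 : ℚ) ^ (n - 1))
        = f ^ 2 * (((-1 : ℚ) ^ (n - 1)) * ((-1 : ℚ) ^ (n - 1))) := by ring
      _ = f ^ 2 := by rw [this, mul_one]
  -- the special case m = n - 1 of hW'
  have hstep : ∀ Z : Module.End ℚ V,
      W * (x ^ (n - 1) * (W * (x ^ (n - 1) * Z))) = d • (W * (x ^ (n - 1) * Z)) := by
    intro Z
    have := hW' (n - 1) le_rfl Z
    rw [show n - 1 - (n - 1) = 0 from by omega] at this
    rw [this, pow_zero, one_mul]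
  -- main proof
  intro j hj k hk
  rw [Finset.mem_Icc] at hj hk
  simp only [hπ]
  rw [smul_mul_smul_comm]
  rcases lt_trichotomy j k with hlt | heqjk | hgt
  · -- j < k : product is zero
    rw [if_neg (by omega)]
    have hz : x ^ (n - j) * W * x ^ (n - 1) * W * x ^ (j - 1) *
        (x ^ (n - k) * W * x ^ (n - 1) * W * x ^ (k - 1)) = 0 := by
      simp only [mul_assoc]
      rw [hpp (j - 1) (n - k)]
      have hm : j - 1 + (n - k) ≤ n - 1 := by omega
      rw [hW' _ hm]
      rw [show n - 1 - (j - 1 + (n - k)) = k - j from by omega]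
      simp only [mul_smul_comm]
      rw [hzero (n - 1) (k - j) (by omega)]
      simp
    rw [hz, smul_zero]
  · -- j = k : idempotent
    subst heqjk
    rw [if_pos rfl]
    have hz : x ^ (n - j) * W * x ^ (n - 1) * W * x ^ (j - 1) *
        (x ^ (n - j) * W * x ^ (n - 1) * W * x ^ (j - 1)) =
        (d * d) • (x ^ (n - j) * W * x ^ (n - 1) * W * x ^ (j - 1)) := by
      simp only [mul_assoc]
      rw [hpp (j - 1) (n - j), show j - 1 + (n - j) = n - 1 from by omega]
      rw [hstep (W * x ^ (j - 1))]
      simp only [mul_smul_comm]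
      rw [hstep (W * x ^ (j - 1))]
      simp only [mul_smul_comm, smul_smul]
    rw [hz, smul_smul, hcdef, hdd]
    congr 1
    field_simp
  · -- j > k : product is zero
    rw [if_neg (by omega)]
    have hz : x ^ (n - j) * W * x ^ (n - 1) * W * x ^ (j - 1) *
        (x ^ (n - k) * W * x ^ (n - 1) * W * x ^ (k - 1)) = 0 := by
      simp only [mul_assoc]
      rw [hzero (j - 1) (n - k) (by omega)]
      simp
    rw [hz, smul_zero]
end

section
/- Let V be an SL₂(𝕂)-module of unipotent length n (where U is the subgroup of upper unitriangular matrices and Z_k(V) is defined by Z_0 = 0, Z_{k+1}/Z_k = C_{V/Z_k}(U), with Z_n(V) = V). Then the SL₂(𝕂)-submodule generated by Z_1(V) ∩ w·Z_{n-1}(V) is contained in Z_{n-1}(V). -/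
open Matrix

variable (K : Type*) [Field K]

/-- `u_λ = !![1,λ;0,1]` in `SL₂(K)`. -/
def unip (lam : K) : Matrix.SpecialLinearGroup (Fin 2) K :=
  ⟨!![1, lam; 0, 1], by simp [Matrix.det_fin_two_of]⟩

/-- `w = !![0,1;-1,0]` in `SL₂(K)`. -/
def wK : Matrix.SpecialLinearGroup (Fin 2) K :=
  ⟨!![0, 1; -1, 0], by simp [Matrix.det_fin_two_of]⟩

variable (V : Type*) [AddCommGroup V]
  [DistribMulAction (Matrix.SpecialLinearGroup (Fin 2) K) V]

/-- The ascending chain of `U`-centralizers: `Z 0 = 0`,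
`Z (k+1)/Z k = C_{V/Z k}(U)` where `U = {u_λ : λ ∈ K}`. -/
def Zchain : ℕ → AddSubgroup V
  | 0 => ⊥
  | (k + 1) =>
    { carrier := {v | ∀ lam : K, unip K lam • v - v ∈ Zchain k}
      zero_mem' := by intro lam; simpa using (Zchain k).zero_mem
      add_mem' := by
        intro a b ha hb lam
        have : unip K lam • (a + b) - (a + b) =
            (unip K lam • a - a) + (unip K lam • b - b) := by
          rw [smul_add]; abel
        rw [this]
        exact (Zchain k).add_mem (ha lam) (hb lam)
      neg_mem' := by
        intro a ha lam
        have : unip K lam • (-a) - (-a) = -(unip K lam • a - a) := by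
          rw [smul_neg]; abel
        rw [this]
        exact (Zchain k).neg_mem (ha lam) }

lemma Zchain_stab (g : Matrix.SpecialLinearGroup (Fin 2) K)
    (hg : ∀ lam : K, ∃ mu : K, unip K lam * g = g * unip K mu) :
    ∀ k, ∀ v ∈ Zchain K V k, g • v ∈ Zchain K V k := by
  intro k
  induction k with
  | zero =>
    intro v hv
    have : v = 0 := by simpa [Zchain] using hv
    simp [Zchain, this]
  | succ k ih =>
    intro v hv lam
    obtain ⟨mu, hmu⟩ := hg lam
    have h1 : unip K lam • g • v - g • v = g • (unip K mu • v - v) := by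
      rw [smul_sub, smul_smul, hmu, mul_smul]
    rw [h1]
    exact ih _ (hv mu)

lemma Zchain_mono : ∀ j k : ℕ, j ≤ k → Zchain K V j ≤ Zchain K V k := by
  have step : ∀ k : ℕ, Zchain K V k ≤ Zchain K V (k + 1) := by
    intro k
    induction k with
    | zero =>
      intro v hv
      have : v = 0 := by simpa [Zchain] using hv
      subst this
      exact (Zchain K V 1).zero_mem
    | succ k ih =>
      intro v hv lam
      exact ih (hv lam)
  intro j k hjk
  induction hjk with
  | refl => exact le_rfl
  | step _ ih => exact ih.trans (step _)

lemma negOne_det : (!![(-1 : K), 0; 0, -1]).det = 1 := by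
  simp [Matrix.det_fin_two_of]

/-- `-1` in `SL₂(K)`. -/
def negOne : Matrix.SpecialLinearGroup (Fin 2) K :=
  ⟨!![-1, 0; 0, -1], negOne_det K⟩

/-- If `V` has unipotent length `n`, then the `SL₂(K)`-submodule generated by
`Z₁(V) ∩ w·Z_{n-1}(V)` is contained in `Z_{n-1}(V)`. -/
theorem generated_by_Z1_cap_wZn1_le_Zn1
    (n : ℕ) (hn : 2 ≤ n) (hlen : Zchain K V n = ⊤) :
    AddSubgroup.closure
      {x : V | ∃ (g : Matrix.SpecialLinearGroup (Fin 2) K) (v : V),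
        v ∈ Zchain K V 1 ∧ (wK K)⁻¹ • v ∈ Zchain K V (n - 1) ∧ x = g • v}
      ≤ Zchain K V (n - 1) := by
  rw [AddSubgroup.closure_le]
  rintro x ⟨g, v, hv1, hvw, rfl⟩
  -- `v` is fixed by `U`
  have hfix : ∀ lam : K, unip K lam • v = v := by
    intro lam
    have h := hv1 lam
    have h0 : unip K lam • v - v = 0 := by simpa [Zchain] using h
    exact sub_eq_zero.mp h0
  set a := (g : Matrix (Fin 2) (Fin 2) K) 0 0 with ha
  set b := (g : Matrix (Fin 2) (Fin 2) K) 0 1 with hb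
  set c := (g : Matrix (Fin 2) (Fin 2) K) 1 0 with hc
  set d := (g : Matrix (Fin 2) (Fin 2) K) 1 1 with hd
  have hdet : a * d - b * c = 1 := by
    rw [ha, hb, hc, hd, ← Matrix.det_fin_two]
    exact g.2
  have hgm : (g : Matrix (Fin 2) (Fin 2) K) = !![a, b; c, d] := by
    rw [ha, hb, hc, hd]; exact Matrix.etaExpand_eq (g : Matrix (Fin 2) (Fin 2) K) |>.symm
  have hvmem : v ∈ Zchain K V (n - 1) := by
    refine Zchain_mono K V 1 (n - 1) ?_ hv1
    omega
  by_cases hc0 : c = 0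
  · -- g is upper triangular
    have had : a * d = 1 := by rw [← hdet, hc0]; ring
    refine Zchain_stab K V g ?_ _ v hvmem
    intro lam
    refine ⟨lam * d * d, ?_⟩
    apply Subtype.ext
    show (unip K lam : Matrix (Fin 2) (Fin 2) K) * g = (g : Matrix (Fin 2) (Fin 2) K) * unip K (lam * d * d)
    rw [hgm, hc0]
    show !![1, lam; 0, 1] * _ = _ * !![1, lam * d * d; 0, 1]
    ext i j
    fin_cases i <;> fin_cases j <;>
      simp [Matrix.mul_apply, Fin.sum_univ_two] <;>
      linear_combination (-(lam * d)) * had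
  · -- Bruhat: g = bmat * w * u
    have hbdet : (!![-c⁻¹, -a; 0, -c]).det = 1 := by
      simp [Matrix.det_fin_two_of, hc0]
    set bmat : Matrix.SpecialLinearGroup (Fin 2) K := ⟨!![-c⁻¹, -a; 0, -c], hbdet⟩ with hbmat
    have hbru : g = bmat * wK K * unip K (d / c) := by
      apply Subtype.ext
      show (g : Matrix (Fin 2) (Fin 2) K) =
        !![-c⁻¹, -a; 0, -c] * !![0, 1; -1, 0] * !![1, d / c; 0, 1]
      rw [hgm]
      ext i j
      fin_cases i <;> fin_cases j <;>
        simp [Matrix.mul_apply, Fin.sum_univ_two, hc0] <;>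
        field_simp <;>
        first
          | linear_combination hdet
          | linear_combination -hdet
          | linear_combination (-2 : K) * hdet
          | linear_combination (2 : K) * hdet
          | ring
    have hww : wK K * wK K = negOne K := by
      apply Subtype.ext
      show (!![0,1;-1,0] : Matrix (Fin 2) (Fin 2) K) * !![0,1;-1,0] = !![-1,0;0,-1]
      rw [Matrix.mul_fin_two]; norm_num
    have hwv : wK K • v = negOne K • ((wK K)⁻¹ • v) := by
      rw [smul_smul, ← hww, mul_assoc, mul_inv_cancel, mul_one]
    have hnegstab : negOne K • ((wK K)⁻¹ • v) ∈ Zchain K V (n - 1) := by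
      refine Zchain_stab K V (negOne K) ?_ _ _ hvw
      intro lam
      refine ⟨lam, ?_⟩
      apply Subtype.ext
      show (!![1,lam;0,1] : Matrix (Fin 2) (Fin 2) K) * !![-1,0;0,-1]
          = !![-1,0;0,-1] * !![1,lam;0,1]
      rw [Matrix.mul_fin_two, Matrix.mul_fin_two]
      norm_num
    have hbstab : ∀ u ∈ Zchain K V (n-1), bmat • u ∈ Zchain K V (n - 1) := by
      refine Zchain_stab K V bmat ?_ _
      intro lam
      refine ⟨lam * c * c, ?_⟩
      apply Subtype.ext
      show (!![1,lam;0,1] : Matrix (Fin 2) (Fin 2) K) * !![-c⁻¹, -a; 0, -c]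
          = !![-c⁻¹, -a; 0, -c] * !![1, lam * c * c; 0, 1]
      ext i j
      fin_cases i <;> fin_cases j <;>
        simp [Matrix.mul_apply, Fin.sum_univ_two, hc0] <;>
        field_simp <;>
        ring
    have : g • v = bmat • (negOne K • ((wK K)⁻¹ • v)) := by
      rw [hbru, mul_smul, mul_smul, hfix, ← hwv]
    rw [this]
    exact hbstab _ hnegstab
end

section
/- SL₂(ℚ) is generated by SL₂(ℤ) (embedded via the inclusion ℤ → ℚ) together with the diagonal torus T = {t_λ : λ ∈ ℚˣ}. -/
open Matrix

/-- The canonical embedding `SL₂(ℤ) → SL₂(ℚ)`. -/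
def incl : Matrix.SpecialLinearGroup (Fin 2) ℤ →* Matrix.SpecialLinearGroup (Fin 2) ℚ :=
  Matrix.SpecialLinearGroup.map (Int.castRingHom ℚ)

def torus (lam : ℚ) (h : lam ≠ 0) : Matrix.SpecialLinearGroup (Fin 2) ℚ :=
  ⟨!![lam, 0; 0, lam⁻¹], by
    simp [Matrix.det_fin_two_of, mul_inv_cancel₀ h]⟩

/-!
`SL₂` of a field is generated by its elementary transvections. Conjugating by `t_λ` multiplies
the off-diagonal entry of an upper (lower) transvection by `λ²` (`λ⁻²`), so writing `c = x / y`
with `x, y` integers, the transvection with entry `c` is the conjugate by `t_{y⁻¹}` (or its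
inverse) of the integral transvection with entry `x * y`.
-/

namespace Matrix.SpecialLinearGroup

open MatrixGroups

theorem map_transvection {ι R S : Type*} [Fintype ι] [DecidableEq ι] [CommRing R] [CommRing S]
    (f : R →+* S) {i j : ι} (hij : i ≠ j) (b : R) :
    map f (transvection hij b) = transvection hij (f b) :=
  Subtype.ext <| by ext; simp [transvection_coe, Matrix.one_apply, Matrix.single_apply, apply_ite f]

variable {F : Type*} [Field F]

theorem SL2.eq_top_of_transvection_mem {H : Subgroup SL(2, F)}
    (h : ∀ (i j : Fin 2) (hij : i ≠ j) (c : F), transvection hij c ∈ H) : H = ⊤ :=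
  eq_top_iff.2 fun A _ ↦ SL2.transvection_induction (· ∈ H) h (fun _ _ ↦ mul_mem) A

theorem SL2.coe_transvection_zero_one (b : F) :
    (transvection (zero_ne_one (α := Fin 2)) b : Matrix (Fin 2) (Fin 2) F) = !![1, b; 0, 1] := by
  ext i j
  fin_cases i <;> fin_cases j <;> simp [transvection_coe]

theorem SL2.coe_transvection_one_zero (b : F) :
    (transvection (one_ne_zero (α := Fin 2)) b : Matrix (Fin 2) (Fin 2) F) = !![1, 0; b, 1] := by
  ext i j
  fin_cases i <;> fin_cases j <;> simp [transvection_coe]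

theorem diag2_mul_transvection_mul_inv (a : F) (ha : a ≠ 0) (b : F) :
    diag2 a ha * transvection zero_ne_one b * (diag2 a ha)⁻¹ =
      transvection zero_ne_one (a ^ 2 * b) := by
  rw [diag2_inv]
  refine Subtype.ext ?_
  simp [diag2_coe', SL2.coe_transvection_zero_one, ha, sq]
  ring

theorem inv_diag2_mul_transvection_mul (a : F) (ha : a ≠ 0) (b : F) :
    (diag2 a ha)⁻¹ * transvection one_ne_zero b * diag2 a ha =
      transvection one_ne_zero (a ^ 2 * b) := by
  rw [diag2_inv]
  refine Subtype.ext ?_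
  simp [diag2_coe', SL2.coe_transvection_one_zero, ha, sq]
  ring

theorem SL2.transvection_sq_mul_mem {H : Subgroup SL(2, F)} {a : F} {ha : a ≠ 0}
    (hdiag : diag2 a ha ∈ H) {i j : Fin 2} (hij : i ≠ j) {b : F}
    (hb : transvection hij b ∈ H) :
    transvection hij (a ^ 2 * b) ∈ H := by
  fin_cases i <;> fin_cases j
  · exact absurd rfl hij
  · rw [← diag2_mul_transvection_mul_inv a ha]
    exact mul_mem (mul_mem hdiag hb) (inv_mem hdiag)
  · rw [← inv_diag2_mul_transvection_mul a ha]
    exact mul_mem (mul_mem (inv_mem hdiag) hb) hdiag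
  · exact absurd rfl hij

theorem SL2.eq_top_of_diag2_mem_of_algebraMap_transvection_mem (R : Type*) [CommRing R]
    [Nontrivial R] [Algebra R F] [IsFractionRing R F] {H : Subgroup SL(2, F)}
    (hdiag : ∀ (a : F) (ha : a ≠ 0), diag2 a ha ∈ H)
    (htransvection :
      ∀ (i j : Fin 2) (hij : i ≠ j) (r : R), transvection hij (algebraMap R F r) ∈ H) :
    H = ⊤ := by
  refine SL2.eq_top_of_transvection_mem fun i j hij c ↦ ?_
  obtain ⟨x, y, hy, rfl⟩ := IsFractionRing.div_surjective (A := R) c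
  have hy' : algebraMap R F y ≠ 0 := IsFractionRing.to_map_ne_zero_of_mem_nonZeroDivisors hy
  -- `x / y = (y⁻¹) ^ 2 * (x * y)`
  convert SL2.transvection_sq_mul_mem (hdiag _ (inv_ne_zero hy')) hij
    (htransvection i j hij (x * y)) using 2
  rw [map_mul]
  field_simp

end Matrix.SpecialLinearGroup

open Matrix.SpecialLinearGroup MatrixGroups

theorem torus_eq_diag2 (lam : ℚ) (h : lam ≠ 0) : torus lam h = diag2 lam h :=
  Subtype.ext (diag2_coe' h).symm

/-- `SL₂(ℚ)` is generated by `SL₂(ℤ)` together with the diagonal torus. -/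
theorem sl2Q_generated_by_sl2Z_and_torus :
    Subgroup.closure
      (Set.range incl ∪ {g | ∃ (lam : ℚ) (h : lam ≠ 0), g = torus lam h}) = ⊤ :=
  SL2.eq_top_of_diag2_mem_of_algebraMap_transvection_mem ℤ
    (fun a ha ↦ Subgroup.subset_closure (Or.inr ⟨a, ha, (torus_eq_diag2 a ha).symm⟩))
    (fun _ _ hij n ↦ Subgroup.subset_closure
      (Or.inl ⟨transvection hij n, map_transvection (Int.castRingHom ℚ) hij n⟩))
end

section
/- Let V be a ℚ-vector space with a linear SL₂(ℚ)-action of finite unipotent length (i.e., (u-1)ⁿ = 0 for u = u₁ = !![1,1;0,1]), and let x_λ = log u_λ for λ ∈ ℚ. Then x_λ = λ·x₁ in End(V) for every λ ∈ ℚ. -/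
/-!
Write `N_λ = ρ (u_λ) - 1` and `log` for the truncated logarithm `truncLog n`. Conjugation by
`diag (a, a⁻¹)` sends `u_λ` to `u_{a² λ}`, so `N_μ ^ n = 0` for `μ = 1 / d²`, `d` the denominator
of `λ`. Every `N_{kμ}` with `k ∈ ℤ` is a polynomial without constant term in `N_μ` (for `k < 0`
through the geometric series of `(1 + N_μ)⁻¹`), and modulo `X ^ n` the polynomial `log` turns
`(1 + p) (1 + q)` into a sum, because `(1 + X) log' ≡ 1` modulo `X ^ (n - 1)`. Hence
`log (1 + N_{kμ}) = k log (1 + N_μ)`, and `λ = (num λ · d) μ`, `1 = d² μ` give the claim.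
-/

open Matrix

def unipQ (lam : ℚ) : Matrix.SpecialLinearGroup (Fin 2) ℚ :=
  ⟨!![1, lam; 0, 1], by simp [Matrix.det_fin_two_of]⟩

open Polynomial Finset

namespace Polynomial

noncomputable def truncLog (n : ℕ) : ℚ[X] :=
  ∑ k ∈ Icc 1 (n - 1), C ((-1) ^ (k + 1) * (k : ℚ)⁻¹) * X ^ k

theorem X_dvd_truncLog (n : ℕ) : X ∣ truncLog n :=
  dvd_sum fun k hk => (dvd_pow_self X (by grind)).mul_left _

theorem derivative_truncLog (n : ℕ) :
    derivative (truncLog n) = ∑ j ∈ range (n - 1), (-X) ^ j := by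
  rw [truncLog, derivative_sum, ← Ico_add_one_right_eq_Icc, sum_Ico_eq_sum_range,
    Nat.add_sub_cancel]
  refine sum_congr rfl fun j _ => ?_
  rw [derivative_C_mul_X_pow, add_comm 1 j, Nat.add_sub_cancel, neg_pow (X : ℚ[X])]
  congr 1
  have : ((j + 1 : ℕ) : ℚ) ≠ 0 := by positivity
  rw [mul_assoc, inv_mul_cancel₀ this]
  simp [pow_succ]

theorem one_add_mul_derivative_truncLog (n : ℕ) :
    (1 + X) * derivative (truncLog n) = 1 - (-X) ^ (n - 1) := by
  rw [derivative_truncLog]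
  linear_combination -geom_sum_mul (-X : ℚ[X]) (n - 1)

theorem X_pow_dvd_of_X_pow_dvd_derivative {n : ℕ} {F : ℚ[X]} (h0 : X ∣ F)
    (hd : X ^ (n - 1) ∣ derivative F) : X ^ n ∣ F := by
  rw [X_pow_dvd_iff] at hd ⊢
  rintro (_ | j) hj
  · exact X_dvd_iff.mp h0
  · have := hd j (by omega)
    rw [coeff_derivative, mul_eq_zero] at this
    exact this.resolve_right (by norm_cast)

theorem X_dvd_truncLog_comp (n : ℕ) {t : ℚ[X]} (ht : X ∣ t) : X ∣ (truncLog n).comp t := by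
  obtain ⟨s, hs⟩ := X_dvd_truncLog n
  rw [hs, mul_comp, X_comp]
  exact ht.mul_right _

theorem X_pow_sub_one_dvd_derivative_truncLog_comp (n : ℕ) {t : ℚ[X]} (ht : X ∣ t) :
    X ^ (n - 1) ∣ (1 + t) * derivative ((truncLog n).comp t) - derivative t := by
  have h := congrArg (·.comp t) (one_add_mul_derivative_truncLog n)
  simp only [mul_comp, add_comp, sub_comp, one_comp, X_comp, pow_comp, neg_comp] at h
  rw [derivative_comp, mul_left_comm, h, mul_sub, mul_one, sub_sub_cancel_left, dvd_neg]
  exact (pow_dvd_pow_of_dvd (dvd_neg.mpr ht) _).mul_left _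

-- As `1 + (p + q + p * q) = (1 + p) * (1 + q)`, this says
-- `log ((1 + p) (1 + q)) = log (1 + p) + log (1 + q)` modulo `X ^ n`.
theorem X_pow_dvd_truncLog_comp_add_sub {n : ℕ} {p q : ℚ[X]} (hp : X ∣ p) (hq : X ∣ q) :
    X ^ n ∣ (truncLog n).comp (p + q + p * q) - (truncLog n).comp p - (truncLog n).comp q := by
  set r := p + q + p * q with hr
  have hXr : X ∣ r := dvd_add (dvd_add hp hq) (hp.mul_right q)
  obtain ⟨a, ha⟩ := X_pow_sub_one_dvd_derivative_truncLog_comp n hXr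
  obtain ⟨b, hb⟩ := X_pow_sub_one_dvd_derivative_truncLog_comp n hp
  obtain ⟨c, hc⟩ := X_pow_sub_one_dvd_derivative_truncLog_comp n hq
  have hdr : derivative r = derivative p * (1 + q) + (1 + p) * derivative q := by
    rw [hr, derivative_add, derivative_add, derivative_mul]; ring
  have hcop : IsCoprime (X ^ (n - 1)) (1 + r) := by
    obtain ⟨s, hs⟩ := hXr
    exact IsCoprime.pow_left ⟨-s, 1, by rw [hs]; ring⟩
  refine X_pow_dvd_of_X_pow_dvd_derivative ?_
    (hcop.dvd_of_dvd_mul_left ⟨a - (1 + q) * b - (1 + p) * c, ?_⟩)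
  · exact dvd_sub (dvd_sub (X_dvd_truncLog_comp n hXr) (X_dvd_truncLog_comp n hp))
      (X_dvd_truncLog_comp n hq)
  · simp only [derivative_sub]
    linear_combination ha - (1 + q) * hb - (1 + p) * hc + hdr
      - (derivative ((truncLog n).comp p) + derivative ((truncLog n).comp q)) * hr

variable {A : Type*} [Ring A] [Algebra ℚ A]

theorem aeval_zero_truncLog (n : ℕ) : aeval (0 : A) (truncLog n) = 0 := by
  rw [← coeff_zero_eq_aeval_zero', X_dvd_iff.mp (X_dvd_truncLog n), map_zero]

theorem aeval_aeval_truncLog_add {N : A} {n : ℕ} (hN : N ^ n = 0) {p q : ℚ[X]} (hp : X ∣ p)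
    (hq : X ∣ q) :
    aeval (aeval N (p + q + p * q)) (truncLog n)
      = aeval (aeval N p) (truncLog n) + aeval (aeval N q) (truncLog n) := by
  have h := aeval_eq_zero_of_dvd_aeval_eq_zero (X_pow_dvd_truncLog_comp_add_sub (n := n) hp hq)
    (by rw [map_pow, aeval_X, hN] : aeval N (X ^ n : ℚ[X]) = 0)
  rwa [map_sub, map_sub, aeval_comp, aeval_comp, aeval_comp, sub_sub, sub_eq_zero] at h

end Polynomial

namespace AddChar

variable {G A : Type*} [AddGroup G] [Ring A] (ψ : AddChar G A) {a : G} {n : ℕ}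

theorem pow_map_neg_sub_one_eq_zero (hN : (ψ a - 1) ^ n = 0) : (ψ (-a) - 1) ^ n = 0 := by
  have hcomm : Commute (ψ (-a)) (ψ a) := by
    rw [Commute, SemiconjBy, ← map_add_eq_mul, ← map_add_eq_mul, neg_add_cancel, add_neg_cancel]
  have h : ψ (-a) - 1 = -ψ (-a) * (ψ a - 1) := by
    rw [neg_mul, mul_sub, ← map_add_eq_mul, neg_add_cancel, map_zero_eq_one, mul_one, neg_sub]
  rw [h, (hcomm.neg_left.sub_right (Commute.one_right _)).mul_pow, hN, mul_zero]

variable [Algebra ℚ A]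

theorem map_nsmul_sub_one (m : ℕ) (a : G) :
    ψ (m • a) - 1 = aeval (ψ a - 1) ((1 + X) ^ m - 1 : ℚ[X]) := by
  rw [map_nsmul_eq_pow, map_sub, map_pow, map_add, map_one, aeval_X, add_sub_cancel]

theorem map_neg_sub_one (hN : (ψ a - 1) ^ n = 0) :
    ψ (-a) - 1 = aeval (ψ a - 1) (-X * ∑ j ∈ range n, (-X) ^ j : ℚ[X]) := by
  set N := ψ a - 1
  have hinv : ψ a * aeval N (1 - X * ∑ j ∈ range n, (-X) ^ j : ℚ[X]) = 1 := by
    have h : (1 + X) * (1 - X * ∑ j ∈ range n, (-X) ^ j) = 1 - (-X : ℚ[X]) ^ (n + 1) := by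
      linear_combination X * geom_sum_mul (-X : ℚ[X]) n
    have := congrArg (aeval N) h
    rw [map_mul, map_add, map_one, aeval_X, add_sub_cancel] at this
    rw [this, map_sub, map_one, map_pow, map_neg, aeval_X, neg_pow, pow_succ N, hN, zero_mul,
      mul_zero, sub_zero]
  calc ψ (-a) - 1 = ψ (-a) * (ψ a * aeval N (1 - X * ∑ j ∈ range n, (-X) ^ j : ℚ[X])) - 1 := by
        rw [hinv, mul_one]
    _ = aeval N (-X * ∑ j ∈ range n, (-X) ^ j : ℚ[X]) := by
        rw [← mul_assoc, ← map_add_eq_mul, neg_add_cancel, map_zero_eq_one, one_mul, map_sub,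
          map_one, sub_sub_cancel_left, ← map_neg, neg_mul]

theorem aeval_truncLog_nsmul (hN : (ψ a - 1) ^ n = 0) (m : ℕ) :
    aeval (ψ (m • a) - 1) (truncLog n) = m • aeval (ψ a - 1) (truncLog n) := by
  induction m with
  | zero => rw [zero_smul, map_zero_eq_one, sub_self, aeval_zero_truncLog, zero_smul]
  | succ m ih =>
    have hp : X ∣ ((1 + X) ^ m - 1 : ℚ[X]) := by
      have := sub_dvd_pow_sub_pow (1 + X : ℚ[X]) 1 m
      rwa [add_sub_cancel_left, one_pow] at this
    have h := aeval_aeval_truncLog_add hN hp dvd_rfl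
    rw [aeval_X, ← map_nsmul_sub_one, show ((1 + X) ^ m - 1 + X + ((1 + X) ^ m - 1) * X : ℚ[X])
      = (1 + X) ^ (m + 1) - 1 by ring, ← map_nsmul_sub_one] at h
    rw [h, ih, succ_nsmul]

theorem aeval_truncLog_neg (hN : (ψ a - 1) ^ n = 0) :
    aeval (ψ (-a) - 1) (truncLog n) = -aeval (ψ a - 1) (truncLog n) := by
  set P : ℚ[X] := -X * ∑ j ∈ range n, (-X) ^ j
  have hP : P + X + P * X = X * (-X) ^ n := by
    linear_combination X * geom_sum_mul (-X : ℚ[X]) n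
  have h := aeval_aeval_truncLog_add (p := P) hN ((dvd_neg.mpr dvd_rfl).mul_right _) dvd_rfl
  rw [hP, map_mul, map_pow, map_neg, aeval_X, neg_pow, hN, mul_zero, mul_zero,
    aeval_zero_truncLog, ← map_neg_sub_one ψ hN] at h
  exact eq_neg_of_add_eq_zero_left h.symm

theorem aeval_truncLog_zsmul (hN : (ψ a - 1) ^ n = 0) (k : ℤ) :
    aeval (ψ (k • a) - 1) (truncLog n) = k • aeval (ψ a - 1) (truncLog n) := by
  cases k with
  | ofNat m => simpa using aeval_truncLog_nsmul ψ hN m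
  | negSucc m =>
    rw [negSucc_zsmul, ← neg_nsmul, aeval_truncLog_nsmul ψ (pow_map_neg_sub_one_eq_zero ψ hN),
      aeval_truncLog_neg ψ hN, negSucc_zsmul, neg_nsmul]

theorem aeval_truncLog_eq_smul (ψ : AddChar ℚ A) {μ l : ℚ} (hN : (ψ μ - 1) ^ n = 0) {k m : ℤ}
    (hk : k • μ = l) (hm : m • μ = 1) :
    aeval (ψ l - 1) (truncLog n) = l • aeval (ψ 1 - 1) (truncLog n) := by
  rw [← hk, ← hm, aeval_truncLog_zsmul ψ hN, aeval_truncLog_zsmul ψ hN,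
    ← Int.cast_smul_eq_zsmul ℚ k, ← Int.cast_smul_eq_zsmul ℚ m, smul_smul]
  rw [zsmul_eq_mul] at hm ⊢
  congr 1
  linear_combination -(k : ℚ) * hm

end AddChar

theorem pow_eq_zero_of_semiconjBy {M : Type*} [MonoidWithZero M] {u x y : M} {n : ℕ}
    (hu : IsUnit u) (h : SemiconjBy u x y) (hx : x ^ n = 0) : y ^ n = 0 := by
  have := (h.pow_right n).eq
  rwa [hx, mul_zero, eq_comm, hu.mul_left_eq_zero] at this

def unipQChar : AddChar ℚ (SpecialLinearGroup (Fin 2) ℚ) where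
  toFun := unipQ
  map_zero_eq_one' := Subtype.ext one_fin_two.symm
  map_add_eq_mul' a b :=
    Subtype.ext (by simp [add_comm] : !![1, a + b; 0, 1] = !![1, a; 0, 1] * !![1, b; 0, 1])

def diagQ (a : ℚˣ) : SpecialLinearGroup (Fin 2) ℚ :=
  ⟨!![(a : ℚ), 0; 0, ((a⁻¹ : ℚˣ) : ℚ)], by simp⟩

theorem semiconjBy_diagQ_unipQ (a : ℚˣ) (l : ℚ) :
    SemiconjBy (diagQ a) (unipQ l) (unipQ (a ^ 2 * l)) :=
  Subtype.ext (by simp; field_simp :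
    !![(a : ℚ), 0; 0, ((a⁻¹ : ℚˣ) : ℚ)] * !![1, l; 0, 1]
      = !![1, (a : ℚ) ^ 2 * l; 0, 1] * !![(a : ℚ), 0; 0, ((a⁻¹ : ℚˣ) : ℚ)])

theorem pow_map_unipQ_sq_mul_sub_one_eq_zero {R : Type*} [Ring R]
    (f : SpecialLinearGroup (Fin 2) ℚ →* R) (a : ℚˣ) {l : ℚ} {n : ℕ}
    (h : (f (unipQ l) - 1) ^ n = 0) : (f (unipQ (a ^ 2 * l)) - 1) ^ n = 0 :=
  pow_eq_zero_of_semiconjBy ((Group.isUnit (diagQ a)).map f)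
    (((semiconjBy_diagQ_unipQ a l).map f).sub_right (SemiconjBy.one_right _)) h

/-- If `V` is a `ℚ[SL₂(ℚ)]`-module of finite unipotent length `n`, then with
`x_λ = log u_λ` one has `x_λ = λ · x₁` in `End(V)` for every `λ ∈ ℚ`. -/
theorem log_unip_is_scalar
    (V : Type*) [AddCommGroup V] [Module ℚ V]
    (ρ : Representation ℚ (Matrix.SpecialLinearGroup (Fin 2) ℚ) V)
    (n : ℕ) (hlen : (ρ (unipQ 1) - 1) ^ n = 0)
    (x : ℚ → Module.End ℚ V)
    (hx : ∀ lam : ℚ, x lam = ∑ k ∈ Finset.Icc (1 : ℕ) (n - 1),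
      ((-1 : ℚ) ^ (k + 1) * (k : ℚ)⁻¹) • (ρ (unipQ lam) - 1) ^ k) :
    ∀ lam : ℚ, x lam = lam • x 1 := by
  intro lam
  let ψ := (ρ : SpecialLinearGroup (Fin 2) ℚ →* Module.End ℚ V).compAddChar unipQChar
  have hxψ (l : ℚ) : x l = aeval (ψ l - 1) (truncLog n) := by
    simp only [hx, truncLog, map_sum, map_mul, aeval_C, map_pow, aeval_X, Algebra.smul_def]
    rfl
  have hd : (lam.den : ℚ) ≠ 0 := by positivity
  have hN : (ψ ((lam.den : ℚ)⁻¹ ^ 2) - 1) ^ n = 0 := by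
    have h := pow_map_unipQ_sq_mul_sub_one_eq_zero ρ (Units.mk0 _ hd)⁻¹ hlen
    rwa [mul_one, Units.val_inv_eq_inv_val, Units.val_mk0] at h
  rw [hxψ, hxψ, ψ.aeval_truncLog_eq_smul hN (k := lam.num * lam.den) (m := lam.den ^ 2)]
  · rw [zsmul_eq_mul]
    push_cast
    field_simp
    rw [mul_comm, Rat.mul_den_eq_num]
  · rw [zsmul_eq_mul]
    push_cast
    field_simp
end

section
/- Let V be a ℚ[SL₂(ℤ)]-module of length ≤ n satisfying the identities (1/(n-k)!)·w x^{n-k} w x^{n-1} = ((-1)^{n-k}/(k-1)!)·x^{k-1} w x^{n-1} in End(V) for k = 1,…,n, where x = log u. Then V_⊤ := ⨁_{k=1}^n im(π_k) (with π_k = (1/((n-1)!)²)·x^{n-k} w x^{n-1} w x^{k-1}) is an SL₂(ℤ)-invariant subspace of V, and the quotient V/V_⊤ satisfies (u-1)^{n-1} = 0. -/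
/-!
Put `τ_a = x^a w x^{n-1}`. Since `x = log u` is `u - 1` times a unit of `ℚ[u - 1]`, we have
`x^n = 0`, `x^{n-1} = (u-1)^{n-1}` and `u - 1 ∈ ℚ[x]`. Read with `a = n - k`, the hypotheses say
`w τ_a = c_a τ_{n-1-a}`; as `τ_a τ_b = 0` for `b > 0`, this gives `π_k τ_a = δ_{a,n-k} τ_a`. So the
`π_k` are orthogonal idempotents and `V_⊤ = Σ_a im τ_a`, which is visibly stable under `x` and `w`,
hence under `u` and the monoid generated by `u` and `w`. That monoid is all of `SL₂(ℤ)`, as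
`w⁻¹ = w³` and `u⁻¹ = wuwuw`; this matters because, `V` being possibly infinite-dimensional,
stability under an operator does not pass to its inverse. Finally `(u-1)^{n-1} = x^{n-1} = w⁻¹ τ_0`.
-/

open Matrix

namespace Polynomial

variable {R : Type*} [CommRing R] {L : R[X]}

theorem X_pow_succ_dvd_pow_sub_X_pow (hL : X ^ 2 ∣ L - X) (j : ℕ) :
    X ^ (j + 1) ∣ L ^ j - X ^ j := by
  obtain ⟨s, hs⟩ := hL
  have hsplit : L = X * (1 + X * s) := by linear_combination hs
  obtain ⟨t, ht⟩ := sub_dvd_pow_sub_pow (1 + X * s) 1 j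
  refine ⟨s * t, ?_⟩
  rw [hsplit, mul_pow, one_pow] at *
  linear_combination X ^ j * ht

theorem exists_X_pow_dvd_comp_sub (hL : X ^ 2 ∣ L - X) (n : ℕ) (p : R[X]) :
    ∃ Q : R[X], X ^ n ∣ Q.comp L - p := by
  suffices key : ∀ d j, n ≤ j + d → ∀ p : R[X], ∃ Q : R[X], X ^ n ∣ Q.comp L - X ^ j * p by
    simpa using key n 0 le_add_self p
  intro d
  induction d with
  | zero =>
    intro j hj p
    exact ⟨0, by simpa using (pow_dvd_pow X hj).mul_right p⟩
  | succ d ih =>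
    intro j hj p
    obtain ⟨t, ht⟩ := X_pow_succ_dvd_pow_sub_X_pow hL j
    obtain ⟨Q, hQ⟩ := ih (j + 1) (by omega) (p.divX - C (p.coeff 0) * t)
    refine ⟨C (p.coeff 0) * X ^ j + Q, ?_⟩
    convert hQ using 1
    rw [add_comp, mul_comp, C_comp, X_pow_comp]
    linear_combination C (p.coeff 0) * ht + X ^ j * X_mul_divX_add p

variable {A : Type*} [Ring A] [Algebra R A] {N : A} {n : ℕ}

theorem aeval_pow_eq_zero_of_X_dvd (hN : N ^ n = 0) (hL : X ∣ L) : aeval N L ^ n = 0 := by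
  rw [← map_pow]
  exact aeval_eq_zero_of_dvd_aeval_eq_zero (pow_dvd_pow_of_dvd hL n) (by simpa using hN)

theorem aeval_pow_eq_pow (hN : N ^ (n + 1) = 0) (hL : X ^ 2 ∣ L - X) :
    aeval N L ^ n = N ^ n := by
  have h := aeval_eq_zero_of_dvd_aeval_eq_zero (x := N) (X_pow_succ_dvd_pow_sub_X_pow hL n)
    (by simpa using hN)
  simpa [sub_eq_zero] using h

theorem exists_aeval_aeval_eq (hN : N ^ n = 0) (hL : X ^ 2 ∣ L - X) :
    ∃ Q : R[X], aeval (aeval N L) Q = N := by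
  obtain ⟨Q, hQ⟩ := exists_X_pow_dvd_comp_sub hL n X
  have h := aeval_eq_zero_of_dvd_aeval_eq_zero (x := N) hQ (by simpa using hN)
  exact ⟨Q, by simpa [aeval_comp, sub_eq_zero] using h⟩

variable (K : Type*) [Field K]

noncomputable def logTrunc (m : ℕ) : K[X] :=
  ∑ k ∈ Finset.Icc 1 m, C ((-1) ^ (k + 1) * (k : K)⁻¹) * X ^ k

variable {K}

theorem aeval_logTrunc {A : Type*} [Ring A] [Algebra K A] (N : A) (m : ℕ) :
    aeval N (logTrunc K m) = ∑ k ∈ Finset.Icc 1 m, ((-1) ^ (k + 1) * (k : K)⁻¹) • N ^ k := by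
  simp [logTrunc, Algebra.smul_def]

theorem X_dvd_logTrunc (m : ℕ) : X ∣ logTrunc K m :=
  Finset.dvd_sum fun k hk => (dvd_pow_self X (by simp at hk; omega)).mul_left _

theorem X_sq_dvd_logTrunc_sub_X {m : ℕ} (hm : 1 ≤ m) : X ^ 2 ∣ logTrunc K m - X := by
  rw [logTrunc, ← Finset.add_sum_Ioc_eq_sum_Icc hm]
  simp only [Nat.reduceAdd, even_two, Even.neg_pow, one_pow, Nat.cast_one, inv_one, mul_one,
    map_one, pow_one, one_mul, add_sub_cancel_left]
  exact Finset.dvd_sum fun k hk => (pow_dvd_pow X (Finset.mem_Ioc.mp hk).1).mul_left _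

end Polynomial

section TopGenerators

variable {K A : Type*} [CommSemiring K] [Semiring A] [Algebra K A] (x W : A) (n : ℕ)

def topGen (a : ℕ) : A := x ^ a * W * x ^ (n - 1)

def topProj (c : K) (k : ℕ) : A := c • (topGen x W n (n - k) * W * x ^ (k - 1))

def IsTopReflection (C : ℕ → K) : Prop :=
  ∀ a < n, W * topGen x W n a = C a • topGen x W n (n - 1 - a)

variable {x W n}

theorem mul_topGen (a : ℕ) : x * topGen x W n a = topGen x W n (a + 1) := by
  simp only [topGen, pow_succ', mul_assoc]

theorem topGen_eq_zero (hx : x ^ n = 0) {a : ℕ} (ha : n ≤ a) : topGen x W n a = 0 := by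
  rw [topGen, pow_eq_zero_of_le ha hx, zero_mul, zero_mul]

theorem topGen_mul_topGen_of_pos (hx : x ^ n = 0) (a : ℕ) {b : ℕ} (hb : 0 < b) :
    topGen x W n a * topGen x W n b = 0 := by
  calc topGen x W n a * topGen x W n b = x ^ a * W * x ^ (n - 1 + b) * W * x ^ (n - 1) := by
        simp only [topGen, pow_add, mul_assoc]
    _ = 0 := by rw [pow_eq_zero_of_le (show n ≤ n - 1 + b by omega) hx]; simp

theorem topGen_mul_topGen_zero {C : ℕ → K} (hW : IsTopReflection x W n C) (hn : 0 < n) (a : ℕ) :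
    topGen x W n a * topGen x W n 0 = C (n - 1) • topGen x W n a := by
  calc topGen x W n a * topGen x W n 0 = x ^ a * (W * topGen x W n (n - 1)) := by
        simp only [topGen, pow_zero, one_mul, mul_assoc]
    _ = C (n - 1) • topGen x W n a := by
        rw [hW _ (by omega), Nat.sub_self, mul_smul_comm]
        simp only [topGen, pow_zero, one_mul, mul_assoc]

theorem mul_pow_mul_topGen (j a : ℕ) :
    W * x ^ j * topGen x W n a = W * topGen x W n (j + a) := by
  simp only [topGen, pow_add, mul_assoc]

theorem topProj_mul_topGen {C : ℕ → K} {c : K} (hx : x ^ n = 0) (hW : IsTopReflection x W n C)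
    (hc : c * (C (n - 1) * C (n - 1)) = 1) {k : ℕ} (hk : k ∈ Finset.Icc 1 n) (a : ℕ) :
    topProj x W n c k * topGen x W n a = if a = n - k then topGen x W n a else 0 := by
  obtain ⟨hk1, hkn⟩ := Finset.mem_Icc.mp hk
  rw [topProj, smul_mul_assoc, mul_assoc, mul_assoc, ← mul_assoc W, mul_pow_mul_topGen]
  rcases lt_trichotomy a (n - k) with ha | rfl | ha
  · rw [hW _ (by omega), mul_smul_comm, topGen_mul_topGen_of_pos hx _ (by omega), if_neg ha.ne]
    simp
  · rw [if_pos rfl, show k - 1 + (n - k) = n - 1 by omega, hW _ (by omega), Nat.sub_self,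
      mul_smul_comm, topGen_mul_topGen_zero hW (by omega), smul_smul, smul_smul, mul_assoc, hc,
      one_smul]
  · rw [topGen_eq_zero hx (a := k - 1 + a) (by omega), mul_zero, mul_zero, smul_zero,
      if_neg ha.ne']

theorem topProj_eq_topGen_mul (c : K) (k : ℕ) :
    topProj x W n c k = topGen x W n (n - k) * (c • (W * x ^ (k - 1))) := by
  rw [topProj, mul_smul_comm, mul_assoc]

theorem topProj_mul_topProj {C : ℕ → K} {c : K} (hx : x ^ n = 0) (hW : IsTopReflection x W n C)
    (hc : c * (C (n - 1) * C (n - 1)) = 1) {k l : ℕ} (hk : k ∈ Finset.Icc 1 n)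
    (hl : l ∈ Finset.Icc 1 n) :
    topProj x W n c k * topProj x W n c l = if k = l then topProj x W n c l else 0 := by
  obtain ⟨hk1, hkn⟩ := Finset.mem_Icc.mp hk
  obtain ⟨hl1, hln⟩ := Finset.mem_Icc.mp hl
  rw [topProj_eq_topGen_mul c l, ← mul_assoc, topProj_mul_topGen hx hW hc hk]
  by_cases hkl : k = l
  · rw [if_pos (by omega), if_pos hkl]
  · rw [if_neg (by omega), if_neg hkl, zero_mul]

theorem orthogonalIdempotents_topProj {C : ℕ → K} {c : K} (hx : x ^ n = 0)
    (hW : IsTopReflection x W n C) (hc : c * (C (n - 1) * C (n - 1)) = 1) :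
    OrthogonalIdempotents fun k : Finset.Icc 1 n => topProj x W n c k where
  idem k := by
    rw [IsIdempotentElem, topProj_mul_topProj hx hW hc k.2 k.2, if_pos rfl]
  ortho k l hkl := by
    dsimp only
    rw [topProj_mul_topProj hx hW hc k.2 l.2, if_neg (Subtype.coe_injective.ne hkl)]

end TopGenerators

section Coefficients

variable (K : Type*) [Field K]

def reflCoeff (n a : ℕ) : K := a.factorial * ((-1) ^ a * ((n - 1 - a).factorial : K)⁻¹)

theorem inv_factorial_sq_mul_reflCoeff [CharZero K] (n : ℕ) :
    (((n - 1).factorial : K) ^ 2)⁻¹ * (reflCoeff K n (n - 1) * reflCoeff K n (n - 1)) = 1 := by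
  simp only [reflCoeff, Nat.sub_self, Nat.factorial_zero, Nat.cast_one, inv_one, mul_one]
  have hfac : ((n - 1).factorial : K) ≠ 0 := Nat.cast_ne_zero.mpr (Nat.factorial_ne_zero _)
  field_simp
  rw [pow_right_comm, neg_one_sq, one_pow]

variable {K} {A : Type*} [Ring A] [Algebra K A] {x W : A} {n : ℕ}

theorem isTopReflection_of_forall_Icc [CharZero K]
    (h : ∀ k ∈ Finset.Icc 1 n, ((n - k).factorial : K)⁻¹ • (W * x ^ (n - k) * W * x ^ (n - 1)) =
      ((-1) ^ (n - k) * ((k - 1).factorial : K)⁻¹) • (x ^ (k - 1) * W * x ^ (n - 1))) :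
    IsTopReflection x W n (reflCoeff K n) := by
  intro a ha
  have hk := h (n - a) (Finset.mem_Icc.mpr ⟨by omega, by omega⟩)
  rw [show n - (n - a) = a by omega, show n - a - 1 = n - 1 - a by omega] at hk
  have hfac : (a.factorial : K) ≠ 0 := Nat.cast_ne_zero.mpr a.factorial_ne_zero
  calc W * topGen x W n a
      = (a.factorial : K) • ((a.factorial : K)⁻¹ • (W * x ^ a * W * x ^ (n - 1))) := by
        rw [smul_smul, mul_inv_cancel₀ hfac, one_smul, topGen]
        simp only [mul_assoc]
    _ = reflCoeff K n a • topGen x W n (n - 1 - a) := by rw [hk, smul_smul]; rfl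

end Coefficients

section Ranges

variable {R M : Type*} [Semiring R] [AddCommMonoid M] [Module R M]

open LinearMap

theorem OrthogonalIdempotents.iSupIndep_range {ι : Type*} {e : ι → Module.End R M}
    (he : OrthogonalIdempotents e) : iSupIndep fun i => range (e i) := by
  intro i
  rw [Submodule.disjoint_def]
  rintro _ ⟨v, rfl⟩ hv
  have hker : (⨆ (j) (_ : j ≠ i), range (e j)) ≤ ker (e i) := iSup₂_le fun j hj => by
    rintro _ ⟨v', rfl⟩
    rw [mem_ker, ← Module.End.mul_apply, he.ortho hj.symm, LinearMap.zero_apply]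
  calc e i v = (e i * e i) v := by rw [(he.idem i).eq]
    _ = 0 := hker hv

theorem iSup_range_mem_invtSubmodule {ι : Type*} {T : ι → Module.End R M} {f : Module.End R M}
    (h : ∀ i, range (f * T i) ≤ ⨆ j, range (T j)) : (⨆ i, range (T i)) ∈ f.invtSubmodule := by
  rw [Module.End.mem_invtSubmodule_iff_map_le, Submodule.map_iSup]
  exact iSup_le fun i => (range_comp (T i) f).symm.trans_le (h i)

end Ranges

theorem mem_invtSubmodule_of_mem_adjoin {R M : Type*} [CommSemiring R] [AddCommMonoid M]
    [Module R M] {S : Set (Module.End R M)} {p : Submodule R M} (hS : ∀ g ∈ S, p ∈ g.invtSubmodule)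
    {f : Module.End R M} (hf : f ∈ Algebra.adjoin R S) : p ∈ f.invtSubmodule := by
  simp only [Module.End.mem_invtSubmodule_iff_forall_mem_of_mem] at hS ⊢
  induction hf using Algebra.adjoin_induction with
  | mem g hg => exact hS g hg
  | algebraMap r =>
    exact fun v hv => by simpa [Algebra.algebraMap_eq_smul_one] using p.smul_mem r hv
  | add f g _ _ hf hg => exact fun v hv => p.add_mem (hf v hv) (hg v hv)
  | mul f g _ _ hf hg => exact fun v hv => hf _ (hg v hv)

section TopSubmodule

variable {K V : Type*} [CommSemiring K] [AddCommMonoid V] [Module K V]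
  {x W : Module.End K V} {n : ℕ}

open LinearMap

variable (x W n) in
def topSubmodule : Submodule K V := ⨆ a, range (topGen x W n a)

theorem range_topGen_le_topSubmodule (a : ℕ) : range (topGen x W n a) ≤ topSubmodule x W n :=
  le_iSup (fun a => range (topGen x W n a)) a

theorem iSup_range_topProj {C : ℕ → K} {c : K} (hx : x ^ n = 0) (hW : IsTopReflection x W n C)
    (hc : c * (C (n - 1) * C (n - 1)) = 1) :
    ⨆ k ∈ Finset.Icc 1 n, range (topProj x W n c k) = topSubmodule x W n := by
  refine le_antisymm (iSup₂_le fun k _ => ?_) (iSup_le fun a => ?_)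
  · rw [topProj_eq_topGen_mul]
    exact (range_comp_le_range _ _).trans (range_topGen_le_topSubmodule _)
  · rcases lt_or_ge a n with ha | ha
    · have hk : n - a ∈ Finset.Icc 1 n := Finset.mem_Icc.mpr ⟨by omega, by omega⟩
      have hfix := topProj_mul_topGen hx hW hc hk a
      rw [if_pos (by omega)] at hfix
      rw [← hfix]
      exact (range_comp_le_range _ _).trans (le_biSup (fun k => range (topProj x W n c k)) hk)
    · rw [topGen_eq_zero hx ha, range_zero]
      exact bot_le

theorem topSubmodule_mem_invtSubmodule_of_mem_adjoin {C : ℕ → K} (hx : x ^ n = 0)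
    (hW : IsTopReflection x W n C) {f : Module.End K V} (hf : f ∈ Algebra.adjoin K {x, W}) :
    topSubmodule x W n ∈ f.invtSubmodule := by
  refine mem_invtSubmodule_of_mem_adjoin ?_ hf
  rintro g (rfl | rfl) <;> refine iSup_range_mem_invtSubmodule fun a => ?_
  · rw [mul_topGen]
    exact range_topGen_le_topSubmodule _
  · rcases lt_or_ge a n with ha | ha
    · rw [hW a ha]
      exact (range_smul_le_range _ _).trans (range_topGen_le_topSubmodule _)
    · rw [topGen_eq_zero hx ha, mul_zero, range_zero]
      exact bot_le

end TopSubmodule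

theorem u_inv : u⁻¹ = w * u * w * u * w := by
  refine inv_eq_of_mul_eq_one_right ?_
  decide

theorem w_inv : w⁻¹ = w * w * w := by
  refine inv_eq_of_mul_eq_one_right ?_
  decide

theorem submonoid_closure_u_w :
    Submonoid.closure ({u, w} : Set (Matrix.SpecialLinearGroup (Fin 2) ℤ)) = ⊤ := by
  have hST : {ModularGroup.S, ModularGroup.T} ⊆ (Subgroup.closure {u, w} : Set _) := by
    have hS : ModularGroup.S = w⁻¹ := eq_inv_of_mul_eq_one_left (by decide)
    have hT : ModularGroup.T = u := by decide
    rintro g (rfl | rfl)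
    · exact hS ▸ inv_mem (Subgroup.subset_closure (by simp))
    · exact hT ▸ Subgroup.subset_closure (by simp)
  refine (Submonoid.eq_top_iff' _).mpr fun g => ?_
  have hg : g ∈ Subgroup.closure {u, w} :=
    Subgroup.closure_le _ |>.mpr hST (SpecialLinearGroup.SL2Z_generators ▸ Subgroup.mem_top g)
  have hu : u ∈ Submonoid.closure {u, w} := Submonoid.subset_closure (by simp)
  have hw : w ∈ Submonoid.closure {u, w} := Submonoid.subset_closure (by simp)
  induction hg using Subgroup.closure_induction'' with
  | mem g hg => exact Submonoid.subset_closure hg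
  | inv_mem g hg =>
    rcases hg with rfl | rfl
    · rw [u_inv]
      exact mul_mem (mul_mem (mul_mem (mul_mem hw hu) hw) hu) hw
    · rw [w_inv]
      exact mul_mem (mul_mem hw hw) hw
  | one => exact one_mem _
  | mul g h _ _ hg hh => exact mul_mem hg hh

theorem MonoidHom.apply_mem_of_apply_u_mem_of_apply_w_mem {M : Type*} [Monoid M]
    (f : Matrix.SpecialLinearGroup (Fin 2) ℤ →* M) {S : Submonoid M} (hu : f u ∈ S) (hw : f w ∈ S)
    (g : Matrix.SpecialLinearGroup (Fin 2) ℤ) : f g ∈ S :=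
  (Submonoid.closure_le (S := S.comap f)).mpr (by rintro _ (rfl | rfl) <;> assumption)
    (submonoid_closure_u_w ▸ Submonoid.mem_top g)

/-- Criterion: under the displayed identities, `V_⊤ = ⨁ im π_k` is a direct sum,
is `SL₂(ℤ)`-invariant, and the quotient `V/V_⊤` satisfies `(u-1)^{n-1} = 0`. -/
theorem Vtop_invariant_and_quotient_shorter
    (n : ℕ) (hn : 2 ≤ n)
    (V : Type*) [AddCommGroup V] [Module ℚ V]
    (ρ : Representation ℚ (Matrix.SpecialLinearGroup (Fin 2) ℤ) V)
    (hlen : (ρ u - 1) ^ n = 0)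
    (x : Module.End ℚ V)
    (hx : x = ∑ k ∈ Finset.Icc (1 : ℕ) (n - 1),
      ((-1 : ℚ) ^ (k + 1) * (k : ℚ)⁻¹) • (ρ u - 1) ^ k)
    (heq : ∀ k ∈ Finset.Icc (1 : ℕ) n,
      (((n - k).factorial : ℚ))⁻¹ • (ρ w * x ^ (n - k) * ρ w * x ^ (n - 1)) =
        ((-1 : ℚ) ^ (n - k) * ((k - 1).factorial : ℚ)⁻¹) • (x ^ (k - 1) * ρ w * x ^ (n - 1)))
    (π : ℕ → Module.End ℚ V)
    (hπ : ∀ k, π k = ((((n - 1).factorial : ℚ)) ^ 2)⁻¹ •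
      (x ^ (n - k) * ρ w * x ^ (n - 1) * ρ w * x ^ (k - 1)))
    (Vtop : Submodule ℚ V)
    (hVtop : Vtop = ⨆ k ∈ Finset.Icc (1 : ℕ) n, LinearMap.range (π k)) :
    -- the images of the `π_k` are in direct sum
    iSupIndep
      (fun k : (Finset.Icc (1 : ℕ) n) => LinearMap.range (π k.val)) ∧
    -- `V_⊤` is invariant under the `SL₂(ℤ)`-action
    (∀ (g : Matrix.SpecialLinearGroup (Fin 2) ℤ), ∀ v ∈ Vtop, ρ g v ∈ Vtop) ∧
    -- the action of `u` on the quotient `V/V_⊤` satisfies `(u-1)^{n-1} = 0`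
    (∀ v : V, ((ρ u - 1) ^ (n - 1)) v ∈ Vtop) := by
  have hL := Polynomial.X_sq_dvd_logTrunc_sub_X (K := ℚ) (m := n - 1) (by omega)
  have hxL : x = Polynomial.aeval (ρ u - 1) (Polynomial.logTrunc ℚ (n - 1)) := by
    rw [hx, Polynomial.aeval_logTrunc]
  have hxn : x ^ n = 0 :=
    hxL ▸ Polynomial.aeval_pow_eq_zero_of_X_dvd hlen (Polynomial.X_dvd_logTrunc _)
  have hxN : x ^ (n - 1) = (ρ u - 1) ^ (n - 1) :=
    hxL ▸ Polynomial.aeval_pow_eq_pow (by rwa [Nat.sub_add_cancel (by omega)]) hL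
  obtain ⟨Q, hQ⟩ := Polynomial.exists_aeval_aeval_eq hlen hL
  rw [← hxL] at hQ
  have hW := isTopReflection_of_forall_Icc heq
  have hc := inv_factorial_sq_mul_reflCoeff ℚ n
  have hπ' : π = topProj x (ρ w) n _ := funext hπ
  have hVtop' : Vtop = topSubmodule x (ρ w) n := hVtop.trans (hπ' ▸ iSup_range_topProj hxn hW hc)
  have hu : ρ u ∈ Algebra.adjoin ℚ {x, ρ w} := by
    rw [← sub_add_cancel (ρ u) 1, ← hQ]
    exact add_mem (Algebra.adjoin_mono (by simp) (Polynomial.aeval_mem_adjoin_singleton ℚ x))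
      (one_mem _)
  have hinv g : Vtop ∈ Module.End.invtSubmodule (ρ g) :=
    hVtop' ▸ topSubmodule_mem_invtSubmodule_of_mem_adjoin hxn hW
      (ρ.apply_mem_of_apply_u_mem_of_apply_w_mem hu (Algebra.subset_adjoin (by simp)) g)
  refine ⟨hπ' ▸ (orthogonalIdempotents_topProj hxn hW hc).iSupIndep_range, fun g v hv => hinv g hv,
    fun v => ?_⟩
  have hpow : (ρ u - 1) ^ (n - 1) = ρ w⁻¹ * topGen x (ρ w) n 0 := by
    rw [topGen, ← hxN, pow_zero, one_mul, ← mul_assoc, ← map_mul, inv_mul_cancel, map_one, one_mul]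
  rw [hpow, Module.End.mul_apply]
  exact hinv w⁻¹ (hVtop' ▸ range_topGen_le_topSubmodule 0 (LinearMap.mem_range_self _ v))
end
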